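/- arXiv:2409.06469 — 6 statements merged into one kernel-verified Lean document; each statement's English description precedes it below -/
import Mathlib

section
/- Let X be a Banach space, P ∈ B(X) a bounded projection (P² = P), and L ∈ B(X). Then the operators (P + L/n)^n converge in operator norm to e^{PLP} P as n → ∞; more precisely, (P + L/n)^n = (P + PLP/n)^n + O(1/n) in operator norm, and (P + PLP/n)^n → e^{PLP}P in norm. -/
/-!
Write `B = P + L/n` and `C = P + PLP/n = PBP`. The powers `B^j`, `C^j` with `j ≤ n` are bounded
uniformly in `n`: expanding `(P + s)^j`, a word with `k` letters `s` collapses to at most `k + 1`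
blocks `P`. In the telescoping sum `B^n - C^n = ∑ B^j (B - C) C^(n-1-j)` the two end terms are
`O(1/n)`, and every other term contains the factor `B (B - C) C = (L/n) (B - C) P C`, which is
`O(1/n²)` because `P (L - PLP) P = 0`; hence `B^n - C^n = O(1/n)`.
Moreover `C^n = P (1 + PLP/n)^n`, and `(1 + x/n)^n → exp x` in every Banach algebra:
`exp (x/n)^n = exp x`, and `exp (x/n) - 1 - x/n = o(1/n)` by differentiability of `exp` at `0`.
-/

open Filter NormedSpace Finset Asymptotics Topology

section Ring

variable {R : Type*} [Ring R]

theorem pow_sub_pow_eq_sum_pow_mul_sub_mul_pow (a b : R) (n : ℕ) :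
    a ^ n - b ^ n = ∑ j ∈ range n, a ^ j * (a - b) * b ^ (n - 1 - j) := by
  calc a ^ n - b ^ n
        = ∑ j ∈ range n, (a ^ (j + 1) * b ^ (n - (j + 1)) - a ^ j * b ^ (n - j)) := by
        rw [sum_range_sub (fun j => a ^ j * b ^ (n - j))]; simp
    _ = _ := sum_congr rfl fun j hj => by
        obtain ⟨k, rfl⟩ := Nat.exists_eq_add_of_lt (mem_range.mp hj)
        rw [show j + k + 1 - (j + 1) = k by omega, show j + k + 1 - j = k + 1 by omega,
          show j + k + 1 - 1 - j = k by omega, pow_succ, pow_succ']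
        noncomm_ring

theorem pow_add_two_sub_pow_add_two (a b : R) (m : ℕ) :
    a ^ (m + 2) - b ^ (m + 2) = a ^ (m + 1) * (a - b)
      + ∑ j ∈ range m, a ^ j * (a * (a - b) * b) * b ^ (m - 1 - j) + (a - b) * b ^ (m + 1) := by
  have hsum : ∑ j ∈ range m, a ^ j * (a * (a - b) * b) * b ^ (m - 1 - j)
      = a * (a ^ m - b ^ m) * b := by
    rw [pow_sub_pow_eq_sum_pow_mul_sub_mul_pow, mul_sum, sum_mul]
    refine sum_congr rfl fun j _ => ?_
    simp only [mul_assoc, ← pow_succ', pow_mul_comm' b]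
    rw [← mul_assoc (a ^ j), ← pow_succ, pow_succ', mul_assoc]
  rw [hsum, pow_succ a (m + 1), pow_succ' a m, pow_succ' b (m + 1), pow_succ b m]
  noncomm_ring

theorem add_mul_mul_eq_of_mul_eq_of_mul_mul_eq_zero {p s e c : R} (hpc : p * c = c)
    (hpep : p * e * p = 0) : (p + s) * e * c = s * e * p * c :=
  calc (p + s) * e * c = p * e * p * c + s * e * p * c := by
        conv_lhs => rw [← hpc]
        noncomm_ring
    _ = s * e * p * c := by rw [hpep, zero_mul, zero_add]

end Ring

theorem one_add_div_pow_le_exp_of_le {t : ℝ} (ht : 0 ≤ t) {n j : ℕ} (hj : j ≤ n) :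
    (1 + t / n) ^ j ≤ Real.exp t := by
  calc (1 + t / n) ^ j ≤ Real.exp (t / n) ^ j := by
        gcongr
        linarith [Real.add_one_le_exp (t / n)]
    _ = Real.exp (j * (t / n)) := (Real.exp_nat_mul _ _).symm
    _ ≤ Real.exp t := by
        gcongr
        rcases Nat.eq_zero_or_pos n with rfl | hn
        · simp [Nat.le_zero.mp hj, ht]
        · calc (j : ℝ) * (t / n) ≤ n * (t / n) := by gcongr
            _ = t := mul_div_cancel₀ t (by positivity)

theorem norm_inv_natCast_smul {𝕂 E : Type*} [RCLike 𝕂] [SeminormedAddCommGroup E]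
    [NormedSpace 𝕂 E] (n : ℕ) (x : E) : ‖(n : 𝕂)⁻¹ • x‖ = ‖x‖ / n := by
  rw [norm_smul, norm_inv, RCLike.norm_natCast, inv_mul_eq_div]

section NormedRing

variable {R : Type*} [NormedRing R]

theorem norm_sum_pow_mul_mul_pow_le {a b : R} (e : R) {n : ℕ} {Ka Kb : ℝ}
    (ha : ∀ j < n, ‖a ^ j‖ ≤ Ka) (hb : ∀ j < n, ‖b ^ j‖ ≤ Kb) :
    ‖∑ j ∈ range n, a ^ j * e * b ^ (n - 1 - j)‖ ≤ n * (Ka * Kb) * ‖e‖ := by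
  calc ‖∑ j ∈ range n, a ^ j * e * b ^ (n - 1 - j)‖ ≤ ∑ _j ∈ range n, Ka * Kb * ‖e‖ :=
        norm_sum_le_of_le _ fun j hj => ?_
    _ = n * (Ka * Kb) * ‖e‖ := by rw [sum_const, card_range, nsmul_eq_mul]; ring
  have hj' := mem_range.mp hj
  have hKa : 0 ≤ Ka := (norm_nonneg _).trans (ha j hj')
  calc ‖a ^ j * e * b ^ (n - 1 - j)‖ ≤ ‖a ^ j‖ * ‖e‖ * ‖b ^ (n - 1 - j)‖ := norm_mul₃_le
    _ ≤ Ka * ‖e‖ * Kb := by gcongr; exacts [ha j hj', hb _ (by omega)]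
    _ = Ka * Kb * ‖e‖ := by ring

theorem norm_pow_sub_pow_le {a b : R} {n : ℕ} {Ka Kb : ℝ} (ha : ∀ j < n, ‖a ^ j‖ ≤ Ka)
    (hb : ∀ j < n, ‖b ^ j‖ ≤ Kb) : ‖a ^ n - b ^ n‖ ≤ n * (Ka * Kb) * ‖a - b‖ := by
  rw [pow_sub_pow_eq_sum_pow_mul_sub_mul_pow]
  exact norm_sum_pow_mul_mul_pow_le _ ha hb

variable [NormOneClass R]

theorem norm_pow_sub_pow_le_norm_sub_add_norm_mul_sub_mul {a b : R} {n : ℕ} {Ka Kb : ℝ}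
    (hn : n ≠ 0) (ha : ∀ j < n, ‖a ^ j‖ ≤ Ka) (hb : ∀ j < n, ‖b ^ j‖ ≤ Kb) :
    ‖a ^ n - b ^ n‖ ≤ Ka * Kb * (2 * ‖a - b‖ + n * ‖a * (a - b) * b‖) := by
  have hKa : 1 ≤ Ka := by simpa using ha 0 (Nat.pos_of_ne_zero hn)
  have hKb : 1 ≤ Kb := by simpa using hb 0 (Nat.pos_of_ne_zero hn)
  have hKab : 1 ≤ Ka * Kb := one_le_mul_of_one_le_of_one_le hKa hKb
  obtain _ | _ | m := n
  · exact absurd rfl hn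
  · simp only [zero_add, pow_one, Nat.cast_one, one_mul]
    nlinarith [norm_nonneg (a - b), norm_nonneg (a * (a - b) * b)]
  rw [pow_add_two_sub_pow_add_two]
  have hfirst : ‖a ^ (m + 1) * (a - b)‖ ≤ Ka * Kb * ‖a - b‖ :=
    calc ‖a ^ (m + 1) * (a - b)‖ ≤ Ka * ‖a - b‖ := by
          refine norm_mul_le_of_le (ha _ (by omega)) le_rfl
      _ ≤ Ka * Kb * ‖a - b‖ := by gcongr; nlinarith
  have hlast : ‖(a - b) * b ^ (m + 1)‖ ≤ Ka * Kb * ‖a - b‖ :=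
    calc ‖(a - b) * b ^ (m + 1)‖ ≤ ‖a - b‖ * Kb := norm_mul_le_of_le le_rfl (hb _ (by omega))
      _ ≤ Ka * Kb * ‖a - b‖ := by rw [mul_comm]; gcongr; nlinarith
  have hmid := norm_sum_pow_mul_mul_pow_le (n := m) (a * (a - b) * b)
    (fun j hj => ha j (by omega)) (fun j hj => hb j (by omega))
  calc _ ≤ _ := norm_add₃_le
    _ ≤ Ka * Kb * ‖a - b‖ + m * (Ka * Kb) * ‖a * (a - b) * b‖ + Ka * Kb * ‖a - b‖ := by
        gcongr
    _ ≤ Ka * Kb * (2 * ‖a - b‖ + (m + 2 : ℕ) * ‖a * (a - b) * b‖) := by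
        push_cast
        nlinarith [norm_nonneg (a * (a - b) * b)]

theorem norm_pow_le_exp_of_norm_le_one_add_div {a : R} {c : ℝ} (hc : 0 ≤ c) {n j : ℕ}
    (hj : j ≤ n) (ha : ‖a‖ ≤ 1 + c / n) : ‖a ^ j‖ ≤ Real.exp c :=
  calc ‖a ^ j‖ ≤ ‖a‖ ^ j := norm_pow_le a j
    _ ≤ (1 + c / n) ^ j := by gcongr
    _ ≤ Real.exp c := one_add_div_pow_le_exp_of_le hc hj

variable {p : R}

theorem IsIdempotentElem.norm_pow_add_le_and_norm_pow_add_mul_le (hp : IsIdempotentElem p)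
    (s : R) {M : ℝ} (hM : 1 ≤ M) (hpM : ‖p‖ ≤ M) (j : ℕ) :
    ‖(p + s) ^ j‖ ≤ M * (1 + M * ‖s‖) ^ j ∧ ‖(p + s) ^ j * p‖ ≤ M * (1 + M * ‖s‖) ^ j := by
  induction j with
  | zero => simpa using ⟨hM, hpM⟩
  | succ j ih =>
    obtain ⟨ih₁, ih₂⟩ := ih
    have hstep : M * (1 + M * ‖s‖) ^ j + M * (1 + M * ‖s‖) ^ j * (‖s‖ * M)
        = M * (1 + M * ‖s‖) ^ (j + 1) := by ring
    rw [← hstep]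
    constructor
    · rw [pow_succ, mul_add]
      refine norm_add_le_of_le ih₂ (norm_mul_le_of_le ih₁ ?_)
      exact le_mul_of_one_le_right (norm_nonneg s) hM
    · rw [pow_succ, mul_add, add_mul, mul_assoc, hp.eq, mul_assoc]
      exact norm_add_le_of_le ih₂ (norm_mul_le_of_le ih₁ (norm_mul_le_of_le le_rfl hpM))

variable {𝕂 : Type*} [RCLike 𝕂] [NormedAlgebra 𝕂 R]

theorem IsIdempotentElem.norm_pow_add_inv_natCast_smul_le (hp : IsIdempotentElem p) (l : R)
    {M : ℝ} (hM : 1 ≤ M) (hpM : ‖p‖ ≤ M) {n j : ℕ} (hj : j ≤ n) :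
    ‖(p + (n : 𝕂)⁻¹ • l) ^ j‖ ≤ M * Real.exp (M * ‖l‖) := by
  refine (hp.norm_pow_add_le_and_norm_pow_add_mul_le _ hM hpM j).1.trans ?_
  rw [norm_inv_natCast_smul, ← mul_div_assoc]
  gcongr
  exact one_add_div_pow_le_exp_of_le (by positivity) hj

theorem IsIdempotentElem.exists_norm_pow_add_inv_natCast_smul_sub_pow_le
    (hp : IsIdempotentElem p) (l : R) : ∃ c : ℝ, 0 ≤ c ∧ ∀ n : ℕ, 1 ≤ n →
      ‖(p + (n : 𝕂)⁻¹ • l) ^ n - (p + (n : 𝕂)⁻¹ • (p * l * p)) ^ n‖ ≤ c / n := by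
  set M := max 1 ‖p‖
  have hM : 1 ≤ M := le_max_left _ _
  have hpM : ‖p‖ ≤ M := le_max_right _ _
  set a := p * l * p
  set d := l - a
  set Kl := M * Real.exp (M * ‖l‖)
  set Ka := M * Real.exp (M * ‖a‖)
  refine ⟨Kl * Ka * (2 * ‖d‖ + ‖l‖ * ‖d‖ * ‖p‖ * Ka), by positivity, fun n hn => ?_⟩
  set s := (n : 𝕂)⁻¹ • l
  set C := p + (n : 𝕂)⁻¹ • a
  have hBC : p + s - C = (n : 𝕂)⁻¹ • d := by simp only [s, C, d, smul_sub]; abel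
  have hpa : p * a = a := by simp only [a, ← mul_assoc, hp.eq]
  have hap : a * p = a := by simp only [a, mul_assoc, hp.eq]
  have hpC : p * C = C := by rw [mul_add, hp.eq, mul_smul_comm, hpa]
  have hpdp : p * d * p = 0 := by rw [mul_sub, sub_mul, hpa, hap, sub_self]
  have hpep : p * (p + s - C) * p = 0 := by
    rw [hBC, mul_smul_comm, smul_mul_assoc, hpdp, smul_zero]
  have hC : ‖C‖ ≤ Ka := by simpa using hp.norm_pow_add_inv_natCast_smul_le a hM hpM hn
  have hmid : ‖(p + s) * (p + s - C) * C‖ ≤ ‖l‖ * ‖d‖ * ‖p‖ * Ka / n ^ 2 :=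
    calc ‖(p + s) * (p + s - C) * C‖ ≤ ‖s‖ * ‖p + s - C‖ * ‖p‖ * ‖C‖ := by
          rw [add_mul_mul_eq_of_mul_eq_of_mul_mul_eq_zero hpC hpep]
          exact (norm_mul_le _ _).trans (by gcongr; exact norm_mul₃_le)
      _ ≤ ‖l‖ / n * (‖d‖ / n) * ‖p‖ * Ka := by
          rw [hBC, norm_inv_natCast_smul, norm_inv_natCast_smul]
          gcongr
      _ = ‖l‖ * ‖d‖ * ‖p‖ * Ka / n ^ 2 := by ring
  refine (norm_pow_sub_pow_le_norm_sub_add_norm_mul_sub_mul (a := p + s) (b := C) (Ka := Kl)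
    (Kb := Ka) (by omega) (fun j hj => hp.norm_pow_add_inv_natCast_smul_le l hM hpM hj.le)
    (fun j hj => hp.norm_pow_add_inv_natCast_smul_le a hM hpM hj.le)).trans ?_
  calc _ ≤ Kl * Ka * (2 * (‖d‖ / n) + n * (‖l‖ * ‖d‖ * ‖p‖ * Ka / n ^ 2)) := by
        rw [hBC, norm_inv_natCast_smul]
        gcongr
        rw [← hBC]
        exact hmid
    _ = Kl * Ka * (2 * ‖d‖ + ‖l‖ * ‖d‖ * ‖p‖ * Ka) / n := by field_simp

variable [CompleteSpace R]

theorem NormedSpace.tendsto_one_add_inv_natCast_smul_pow (x : R) :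
    Tendsto (fun n : ℕ => (1 + (n : 𝕂)⁻¹ • x) ^ n) atTop (𝓝 (exp x)) := by
  -- `exp_nsmul` is stated for `ℚ`-algebras.
  let _ : NormedAlgebra ℚ R := NormedAlgebra.restrictScalars ℚ 𝕂 R
  set y : ℕ → R := fun n => (n : 𝕂)⁻¹ • x
  set r : ℕ → R := fun n => exp (y n) - 1 - y n
  have hy : Tendsto y atTop (𝓝 0) := by
    simpa using (tendsto_inv_atTop_nhds_zero_nat (𝕜 := 𝕂)).smul_const x
  have hr : r =o[atTop] y := by
    simpa [Function.comp_def, exp_zero] using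
      (hasFDerivAt_exp_zero (𝕂 := 𝕂) (𝔸 := R)).isLittleO.comp_tendsto hy
  have hny : ∀ᶠ n : ℕ in atTop, (n : 𝕂) • y n = x := by
    filter_upwards [eventually_ne_atTop 0] with n hn
    simp [y, smul_smul, hn]
  have hnr : Tendsto (fun n : ℕ => (n : 𝕂) • r n) atTop (𝓝 0) := by
    have h := ((isBigO_refl (fun n : ℕ => (n : 𝕂)) atTop).smul_isLittleO hr).congr' .rfl hny
    exact (isLittleO_one_iff ℝ).mp (h.trans_isBigO (isBigO_const_one ℝ x atTop))
  have hbound : ∀ᶠ n : ℕ in atTop,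
      ‖(1 + y n) ^ n - exp x‖ ≤ Real.exp (2 * ‖x‖) ^ 2 * ‖(n : 𝕂) • r n‖ := by
    filter_upwards [hr.bound one_pos, hny] with n hrn hn
    have hyn : ‖y n‖ = ‖x‖ / n := norm_inv_natCast_smul n x
    have hxn : 2 * ‖x‖ / n = ‖x‖ / n + ‖x‖ / n := by ring
    have hxn₀ : 0 ≤ ‖x‖ / n := by positivity
    have hexp : ‖exp (y n)‖ ≤ 1 + 2 * ‖x‖ / n :=
      calc ‖exp (y n)‖ = ‖1 + y n + r n‖ := by simp [r]
        _ ≤ 1 + ‖y n‖ + ‖r n‖ := norm_add₃_le.trans_eq (by rw [norm_one])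
        _ ≤ 1 + 2 * ‖x‖ / n := by rw [hyn] at hrn ⊢; linarith
    have hone : ‖1 + y n‖ ≤ 1 + 2 * ‖x‖ / n :=
      calc ‖1 + y n‖ ≤ 1 + ‖x‖ / n := (norm_add_le _ _).trans_eq (by rw [norm_one, hyn])
        _ ≤ 1 + 2 * ‖x‖ / n := by linarith
    have h := norm_pow_sub_pow_le
      (fun j hj => norm_pow_le_exp_of_norm_le_one_add_div (by positivity) hj.le hone)
      (fun j hj => norm_pow_le_exp_of_norm_le_one_add_div (by positivity) hj.le hexp)
    rw [← exp_nsmul, ← Nat.cast_smul_eq_nsmul 𝕂, hn] at h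
    refine h.trans_eq ?_
    rw [norm_smul, RCLike.norm_natCast, norm_sub_rev, ← sub_sub]
    ring
  rw [tendsto_iff_norm_sub_tendsto_zero]
  refine squeeze_zero' (.of_forall fun n => norm_nonneg _) hbound ?_
  simpa using hnr.norm.const_mul (Real.exp (2 * ‖x‖) ^ 2)

theorem IsIdempotentElem.tendsto_pow_add_inv_natCast_smul (hp : IsIdempotentElem p) {a : R}
    (hpa : p * a = a) (hap : a * p = a) :
    Tendsto (fun n : ℕ => (p + (n : 𝕂)⁻¹ • a) ^ n) atTop (𝓝 (exp a * p)) := by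
  have hcomm : Commute p a := hpa.trans hap.symm
  rw [← hcomm.exp_right.eq]
  refine ((tendsto_one_add_inv_natCast_smul_pow (𝕂 := 𝕂) a).const_mul p).congr' ?_
  filter_upwards [eventually_ne_atTop 0] with n hn
  have hfac : p * (1 + (n : 𝕂)⁻¹ • a) = p + (n : 𝕂)⁻¹ • a := by
    rw [mul_add, mul_one, mul_smul_comm, hpa]
  obtain ⟨m, rfl⟩ := Nat.exists_eq_succ_of_ne_zero hn
  rw [← hfac, ((Commute.one_right p).add_right (hcomm.smul_right _)).mul_pow, hp.pow_succ_eq m]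

end NormedRing

/-- Let `X` be a (complex) Banach space, `P` a bounded projection (`P² = P`) and `L` bounded.
Then `(P + L/n)^n → e^{PLP} P` in operator norm; more precisely
`(P + L/n)^n = (P + PLP/n)^n + O(1/n)` in norm and `(P + PLP/n)^n → e^{PLP}P` in norm. -/
theorem binomial_product_projection (X : Type*) [NormedAddCommGroup X] [NormedSpace ℂ X]
    [CompleteSpace X] (P L : X →L[ℂ] X) (hP : P * P = P) :
    Tendsto (fun n : ℕ => (P + ((n : ℂ))⁻¹ • L) ^ n) atTop
        (nhds (exp (P * L * P) * P)) ∧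
    (∃ c : ℝ, 0 ≤ c ∧ ∀ n : ℕ, 1 ≤ n →
        ‖(P + ((n : ℂ))⁻¹ • L) ^ n - (P + ((n : ℂ))⁻¹ • (P * L * P)) ^ n‖ ≤ c / n) ∧
    Tendsto (fun n : ℕ => (P + ((n : ℂ))⁻¹ • (P * L * P)) ^ n) atTop
        (nhds (exp (P * L * P) * P)) := by
  rcases subsingleton_or_nontrivial X with hX | hX
  · exact ⟨tendsto_const_nhds.congr fun _ => Subsingleton.elim _ _,
      ⟨0, le_rfl, fun n _ => by simp [Subsingleton.elim _ (0 : X →L[ℂ] X)]⟩,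
      tendsto_const_nhds.congr fun _ => Subsingleton.elim _ _⟩
  have hlim := IsIdempotentElem.tendsto_pow_add_inv_natCast_smul (𝕂 := ℂ) hP
    (a := P * L * P) (by simp only [← mul_assoc, hP]) (by simp only [mul_assoc, hP])
  obtain ⟨c, hc, hrate⟩ :=
    IsIdempotentElem.exists_norm_pow_add_inv_natCast_smul_sub_pow_le (𝕂 := ℂ) hP L
  refine ⟨?_, ⟨c, hc, hrate⟩, hlim⟩
  have hdiff : Tendsto (fun n : ℕ => (P + ((n : ℂ))⁻¹ • L) ^ n
      - (P + ((n : ℂ))⁻¹ • (P * L * P)) ^ n) atTop (𝓝 0) :=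
    squeeze_zero_norm' ((eventually_ge_atTop 1).mono hrate)
      (tendsto_const_div_atTop_nhds_zero_nat c)
  simpa using hdiff.add hlim
end

section
/- The Kraus operators K_l(η) := ∑_{n=0}^∞ √( C(n+l, n) (1 − |η|²)^l ) η^n |n⟩⟨n+l| of the attenuator channel satisfy the completeness relation ∑_{l=0}^∞ K_l(η)* K_l(η) = 1 (identity operator), for every η ∈ ℂ with |η| ≤ 1. -/
/-!
Each `K l` is a weighted shift `|n + l⟩ ↦ a_l(n) |n⟩`, so `(K l)* K l` is diagonal in the basis,
with entry `|a_l(m - l)|² = C(m, l) (1 - |η|²)^l |η|^(2(m - l))` at `|m⟩` for `l ≤ m` and `0`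
otherwise. By the binomial theorem these entries sum over `l` to `1`. For diagonal operators with
nonnegative entries summing to `1`, Parseval writes `‖∑_{l ∈ s} (K l)* K l ψ - ψ‖²` as a series in
the coefficients of `ψ` whose terms tend to `0` under a summable domination, so the partial sums
converge strongly to the identity.
-/

open scoped InnerProductSpace
open Filter Topology

namespace HilbertBasis

variable {ι 𝕜 E : Type*} [RCLike 𝕜] [NormedAddCommGroup E] [InnerProductSpace 𝕜 E]
  (b : HilbertBasis ι 𝕜 E)

theorem hasSum_sq_norm_inner_right (x : E) : HasSum (fun i => ‖⟪b i, x⟫_𝕜‖ ^ 2) (‖x‖ ^ 2) := by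
  have h := b.hasSum_inner_mul_inner x x
  have hterm : ∀ i, ⟪x, b i⟫_𝕜 * ⟪b i, x⟫_𝕜 = ((‖⟪b i, x⟫_𝕜‖ ^ 2 : ℝ) : 𝕜) := fun i => by
    rw [← inner_conj_symm x, RCLike.conj_mul]; push_cast; rfl
  rw [funext hterm, inner_self_eq_norm_sq_to_K] at h
  exact_mod_cast h

theorem inner_tsum_smul {c : ι → 𝕜} (hc : Summable fun i => ‖c i‖ ^ 2) (j : ι) :
    ⟪b j, ∑' i, c i • b i⟫_𝕜 = c j := by
  let f : lp (fun _ : ι => 𝕜) 2 := ⟨c, memℓp_gen (by simpa using hc)⟩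
  rw [(b.hasSum_repr_symm f).tsum_eq, ← b.repr_apply_apply, LinearIsometryEquiv.apply_symm_apply]

theorem hasSum_of_inner_eq_mul {κ : Type*} {v : κ → E} {x : E} (d : κ → ι → ℝ)
    (hd_nonneg : ∀ k i, 0 ≤ d k i) (hd : ∀ i, HasSum (fun k => d k i) 1)
    (hv : ∀ k i, ⟪b i, v k⟫_𝕜 = d k i * ⟪b i, x⟫_𝕜) : HasSum v x := by
  set D : Finset κ → ι → ℝ := fun s i => ∑ k ∈ s, d k i
  have hD_mem : ∀ s i, D s i ∈ Set.Icc (0 : ℝ) 1 := fun s i =>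
    ⟨Finset.sum_nonneg fun k _ => hd_nonneg k i, sum_le_hasSum s (fun k _ => hd_nonneg k i) (hd i)⟩
  have hinner : ∀ s i, ⟪b i, ∑ k ∈ s, v k - x⟫_𝕜 = ((D s i - 1 : ℝ) : 𝕜) * ⟪b i, x⟫_𝕜 := by
    intro s i
    simp only [inner_sub_right, inner_sum, hv, D, ← Finset.sum_mul]
    push_cast
    ring
  have hnorm : ∀ s, ‖∑ k ∈ s, v k - x‖ ^ 2 = ∑' i, (D s i - 1) ^ 2 * ‖⟪b i, x⟫_𝕜‖ ^ 2 := by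
    intro s
    rw [← (b.hasSum_sq_norm_inner_right _).tsum_eq]
    simp only [hinner, norm_mul, mul_pow, RCLike.norm_ofReal, sq_abs]
  have hlim : Tendsto (fun s => ‖∑ k ∈ s, v k - x‖ ^ 2) atTop (𝓝 0) := by
    simp only [hnorm]
    rw [← tsum_zero]
    refine tendsto_tsum_of_dominated_convergence (b.hasSum_sq_norm_inner_right x).summable
      (fun i => ?_) (Eventually.of_forall fun s i => ?_)
    · simpa using (((hd i).sub_const 1).pow 2).mul_const (‖⟪b i, x⟫_𝕜‖ ^ 2)
    · obtain ⟨h0, h1⟩ := hD_mem s i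
      rw [Real.norm_of_nonneg (by positivity)]
      exact mul_le_of_le_one_left (by positivity) (by nlinarith)
  rw [HasSum, SummationFilter.unconditional_filter, tendsto_iff_norm_sub_tendsto_zero]
  simpa using hlim.sqrt

section WeightedShift

variable {σ : ι → ι} {a : ι → 𝕜} {C : ℝ} {T : E →L[𝕜] E}

theorem inner_weightedShift (hσ : Function.Injective σ) (ha : ∀ i, ‖a i‖ ≤ C)
    (hT : ∀ x, T x = ∑' i, (a i * ⟪b (σ i), x⟫_𝕜) • b i) (x : E) (j : ι) :
    ⟪b j, T x⟫_𝕜 = a j * ⟪b (σ j), x⟫_𝕜 := by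
  refine hT x ▸ b.inner_tsum_smul ?_ j
  refine .of_nonneg_of_le (fun _ => by positivity) (fun i => ?_)
    (((b.hasSum_sq_norm_inner_right x).summable.comp_injective hσ).mul_left (C ^ 2))
  rw [norm_mul, mul_pow]
  exact mul_le_mul_of_nonneg_right (pow_le_pow_left₀ (norm_nonneg _) (ha i) 2) (by positivity)

theorem inner_adjoint_weightedShift_apply [CompleteSpace E] (hσ : Function.Injective σ)
    (ha : ∀ i, ‖a i‖ ≤ C) (hT : ∀ x, T x = ∑' i, (a i * ⟪b (σ i), x⟫_𝕜) • b i) (x : E) (j : ι) :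
    ⟪b j, T.adjoint (T x)⟫_𝕜 =
      (Function.extend σ (fun i => ‖a i‖ ^ 2) 0 j : ℝ) * ⟪b j, x⟫_𝕜 := by
  have hTb : ∀ i, ⟪T (b j), b i⟫_𝕜 = starRingEnd 𝕜 (a i) * ⟪b j, b (σ i)⟫_𝕜 := fun i => by
    rw [← inner_conj_symm, b.inner_weightedShift hσ ha hT, map_mul, inner_conj_symm]
  rw [ContinuousLinearMap.adjoint_inner_right, ← b.tsum_inner_mul_inner]
  simp only [hTb, b.inner_weightedShift hσ ha hT]
  by_cases hj : ∃ i, σ i = j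
  · obtain ⟨i, rfl⟩ := hj
    rw [hσ.extend_apply, tsum_eq_single i fun k hk => by
      rw [b.orthonormal.inner_eq_zero (hσ.ne hk).symm]; ring]
    rw [inner_self_eq_norm_sq_to_K, b.orthonormal.1 (σ i), RCLike.ofReal_one, RCLike.ofReal_pow,
      ← RCLike.conj_mul]
    ring
  · rw [Function.extend_apply' _ _ _ hj]
    simp [b.orthonormal.inner_eq_zero (fun h => hj ⟨_, h.symm⟩)]

end WeightedShift

end HilbertBasis

theorem Function.extend_add_right_eq_ite {α : Type*} [Zero α] (g : ℕ → α) (l m : ℕ) :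
    Function.extend (· + l) g 0 m = if l ≤ m then g (m - l) else 0 := by
  split_ifs with h
  · conv_lhs => rw [← Nat.sub_add_cancel h]
    exact (add_left_injective l).extend_apply g 0 (m - l)
  · exact Function.extend_apply' _ _ _ fun ⟨n, hn⟩ => h (hn ▸ Nat.le_add_left l n)

theorem hasSum_extend_add_choose_mul_pow {p q : ℝ} (hpq : p + q = 1) (m : ℕ) :
    HasSum (fun l => Function.extend (· + l)
      (fun n => ((n + l).choose n : ℝ) * p ^ l * q ^ n) 0 m) 1 := by
  simp only [Function.extend_add_right_eq_ite]
  convert hasSum_sum_of_ne_finset_zero (L := .unconditional ℕ) (s := Finset.range (m + 1))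
    fun l hl => if_neg ?_
  · rw [← one_pow m, ← hpq, add_pow]
    refine Finset.sum_congr rfl fun l hl => ?_
    have hlm : l ≤ m := Nat.lt_succ_iff.mp (Finset.mem_range.mp hl)
    rw [if_pos hlm, Nat.sub_add_cancel hlm, Nat.choose_symm hlm]
    ring
  · simpa [Nat.lt_succ_iff] using hl

/-- The Kraus operators `K_l(η) = ∑_n √(C(n+l,n)(1−|η|²)^l) ηⁿ |n⟩⟨n+l|` of the attenuator
channel satisfy the completeness relation `∑_l K_l(η)* K_l(η) = 1` (the sum converging in the
strong operator topology), for every `η` with `|η| ≤ 1`. -/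
theorem attenuator_kraus_completeness {H : Type*} [NormedAddCommGroup H]
    [InnerProductSpace ℂ H] [CompleteSpace H] (e : HilbertBasis ℕ ℂ H)
    (η : ℂ) (hη : ‖η‖ ≤ 1) (K : ℕ → (H →L[ℂ] H))
    (hK : ∀ (l : ℕ) (ψ : H),
      K l ψ = ∑' n : ℕ,
        (((Real.sqrt ((Nat.choose (n + l) n : ℝ) * (1 - ‖η‖ ^ 2) ^ l) : ℝ) : ℂ)
            * η ^ n * ⟪e (n + l), ψ⟫_ℂ) • e n) :
    ∀ ψ : H, HasSum (fun l : ℕ => (ContinuousLinearMap.adjoint (K l)) (K l ψ)) ψ := by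
  intro ψ
  have h_one_sub : 0 ≤ 1 - ‖η‖ ^ 2 := sub_nonneg.2 (pow_le_one₀ (norm_nonneg η) hη)
  set a : ℕ → ℕ → ℂ := fun l n =>
    ((Real.sqrt ((Nat.choose (n + l) n : ℝ) * (1 - ‖η‖ ^ 2) ^ l) : ℝ) : ℂ) * η ^ n
  have ha : ∀ l n, ‖a l n‖ ^ 2 = ((n + l).choose n : ℝ) * (1 - ‖η‖ ^ 2) ^ l * (‖η‖ ^ 2) ^ n :=
    fun l n => by
      rw [norm_mul, mul_pow, Complex.norm_real, Real.norm_of_nonneg (Real.sqrt_nonneg _),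
        Real.sq_sqrt (by positivity), norm_pow, ← pow_mul, ← pow_mul, mul_comm n]
  set d : ℕ → ℕ → ℝ := fun l => Function.extend (· + l) (fun n => ‖a l n‖ ^ 2) 0
  have hd : ∀ m, HasSum (fun l => d l m) 1 := by
    simpa only [d, ha] using hasSum_extend_add_choose_mul_pow (sub_add_cancel 1 _)
  have hd_nonneg : ∀ l m, 0 ≤ d l m := fun l m => by
    simp only [d, Function.extend_add_right_eq_ite]
    split_ifs <;> positivity
  have ha_le : ∀ l n, ‖a l n‖ ≤ 1 := fun l n => by
    have h := le_hasSum (hd (n + l)) l fun k _ => hd_nonneg k _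
    simp only [d, (add_left_injective l).extend_apply] at h
    exact (pow_le_one_iff_of_nonneg (norm_nonneg _) two_ne_zero).1 h
  exact e.hasSum_of_inner_eq_mul d hd_nonneg hd fun l m =>
    e.inner_adjoint_weightedShift_apply (add_left_injective l) (ha_le l) (hK l) ψ m
end

section
/- For each l ∈ ℕ₀ and η ∈ ℂ with |η| ≤ 1, applying the Kraus operator K_l(η) = ∑_n √(C(n+l,n)(1−|η|²)^l) η^n |n⟩⟨n+l| to a coherent state projector and summing gives ∑_{l=0}^∞ K_l(η)|α⟩⟨α|K_l(η)* = |ηα⟩⟨ηα| for every α ∈ ℂ. -/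
open scoped InnerProductSpace

/-- The coherent state vector `|α⟩ = e^{−|α|²/2} ∑ (αⁿ/√n!) |n⟩` associated to a Hilbert basis. -/
noncomputable def coherentState {H : Type*} [NormedAddCommGroup H] [InnerProductSpace ℂ H]
    [CompleteSpace H] (e : HilbertBasis ℕ ℂ H) (α : ℂ) : H :=
  Real.exp (-(‖α‖) ^ 2 / 2) •
    ∑' n : ℕ, (α ^ n / ((Real.sqrt (Nat.factorial n) : ℝ) : ℂ)) • e n

/-!
Each Kraus operator maps a coherent state to a multiple of a coherent state,
`K_l |α⟩ = w_l |ηα⟩`, because `√C(n+l,n) · α^(n+l) / √(n+l)! = α^l / √l! · α^n / √n!`.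
Up to a Gaussian factor, `w_l` is the `l`-th amplitude of the coherent state `|√(1-|η|²) α⟩`,
so `∑ |w_l|² = e^{|ηα|² - |α|²} e^{(1-|η|²)|α|²} = 1` and
`∑ K_l |α⟩⟨α| K_l* = (∑ |w_l|²) |ηα⟩⟨ηα| = |ηα⟩⟨ηα|`.
-/

open scoped Nat

section InnerProductSpace

variable {𝕜 E ι : Type*} [RCLike 𝕜] [NormedAddCommGroup E] [InnerProductSpace 𝕜 E]

theorem Orthonormal.inner_tsum_smul {v : ι → E} {f : ι → 𝕜} (hv : Orthonormal 𝕜 v)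
    (hf : Summable fun i => f i • v i) (j : ι) : ⟪v j, ∑' i, f i • v i⟫_𝕜 = f j := by
  classical
  rw [← innerSL_apply_apply, (innerSL 𝕜 (v j)).map_tsum hf]
  simp [orthonormal_iff_ite.mp hv]

theorem hasSum_inner_smul_smul_of_hasSum_norm_sq {w : ι → 𝕜} {r : ℝ}
    (hw : HasSum (fun i => ‖w i‖ ^ 2) r) (v x : E) :
    HasSum (fun i => ⟪w i • v, x⟫_𝕜 • w i • v) ((r : 𝕜) • ⟪v, x⟫_𝕜 • v) := by
  have hterm (i : ι) : ⟪w i • v, x⟫_𝕜 • w i • v = ((‖w i‖ ^ 2 : ℝ) : 𝕜) • ⟪v, x⟫_𝕜 • v := by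
    rw [inner_smul_left, smul_smul, smul_smul, mul_right_comm, RCLike.conj_mul]
    norm_cast
  simpa only [hterm, RCLike.ofRealCLM_apply] using
    (RCLike.ofRealCLM.hasSum hw).smul_const (⟪v, x⟫_𝕜 • v)

end InnerProductSpace

noncomputable def coherentAmplitude (β : ℂ) (n : ℕ) : ℂ := β ^ n / (√(n ! : ℝ) : ℂ)

theorem norm_sq_coherentAmplitude (β : ℂ) (n : ℕ) :
    ‖coherentAmplitude β n‖ ^ 2 = (‖β‖ ^ 2) ^ n / n ! := by
  rw [coherentAmplitude, norm_div, Complex.norm_real, Real.norm_of_nonneg (Real.sqrt_nonneg _),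
    div_pow, Real.sq_sqrt (Nat.cast_nonneg _), norm_pow, ← pow_mul, ← pow_mul, mul_comm]

theorem hasSum_norm_sq_coherentAmplitude (β : ℂ) :
    HasSum (fun n => ‖coherentAmplitude β n‖ ^ 2) (Real.exp (‖β‖ ^ 2)) := by
  simpa only [norm_sq_coherentAmplitude, Real.exp_eq_exp_ℝ]
    using NormedSpace.expSeries_div_hasSum_exp (‖β‖ ^ 2)

theorem sqrt_add_choose_mul_pow (n l : ℕ) {t : ℝ} (ht : 0 ≤ t) :
    √((n + l).choose n * t ^ l) = √((n + l)! : ℝ) / (√(n ! : ℝ) * √(l ! : ℝ)) * √t ^ l := by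
  rw [Real.sqrt_mul (by positivity), Nat.cast_add_choose, Real.sqrt_div (Nat.cast_nonneg _),
    Real.sqrt_mul (Nat.cast_nonneg _),
    show t ^ l = (√t ^ l) ^ 2 by rw [← pow_mul, mul_comm, pow_mul, Real.sq_sqrt ht],
    Real.sqrt_sq (by positivity)]

theorem sqrt_add_choose_mul_pow_mul_coherentAmplitude (n l : ℕ) {t : ℝ} (ht : 0 ≤ t) (η α : ℂ) :
    (√((n + l).choose n * t ^ l) : ℂ) * η ^ n * coherentAmplitude α (n + l) =
      coherentAmplitude (√t * α) l * coherentAmplitude (η * α) n := by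
  have hpos : ∀ k : ℕ, (√(k ! : ℝ) : ℂ) ≠ 0 := fun k =>
    Complex.ofReal_ne_zero.2 (Real.sqrt_pos.2 (Nat.cast_pos.2 k.factorial_pos)).ne'
  rw [sqrt_add_choose_mul_pow n l ht]
  simp only [coherentAmplitude]
  push_cast
  field_simp [hpos]
  ring

section HilbertBasis

variable {H : Type*} [NormedAddCommGroup H] [InnerProductSpace ℂ H] [CompleteSpace H]
  (e : HilbertBasis ℕ ℂ H)

theorem summable_coherentAmplitude_smul (β : ℂ) :
    Summable fun n => coherentAmplitude β n • e n :=
  (e.orthonormal.orthogonalFamily.summable_iff_norm_sq_summable _).2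
    (hasSum_norm_sq_coherentAmplitude β).summable

theorem coherentState_eq_smul_tsum (β : ℂ) :
    coherentState e β = (Real.exp (-‖β‖ ^ 2 / 2) : ℂ) • ∑' n, coherentAmplitude β n • e n := by
  rw [coherentState, Complex.coe_smul]
  rfl

theorem inner_basis_coherentState (β : ℂ) (m : ℕ) :
    ⟪e m, coherentState e β⟫_ℂ = Real.exp (-‖β‖ ^ 2 / 2) * coherentAmplitude β m := by
  rw [coherentState_eq_smul_tsum, inner_smul_right,
    e.orthonormal.inner_tsum_smul (summable_coherentAmplitude_smul e β)]

noncomputable def attenuatorWeight (η α : ℂ) (l : ℕ) : ℂ :=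
  Real.exp ((‖η * α‖ ^ 2 - ‖α‖ ^ 2) / 2) * coherentAmplitude (√(1 - ‖η‖ ^ 2) * α) l

theorem tsum_attenuatorKraus_coherentState {η : ℂ} (hη : ‖η‖ ≤ 1) (α : ℂ) (l : ℕ) :
    ∑' n : ℕ, ((√((n + l).choose n * (1 - ‖η‖ ^ 2) ^ l) : ℂ) * η ^ n *
        ⟪e (n + l), coherentState e α⟫_ℂ) • e n =
      attenuatorWeight η α l • coherentState e (η * α) := by
  have ht : 0 ≤ 1 - ‖η‖ ^ 2 := sub_nonneg.2 (pow_le_one₀ (norm_nonneg η) hη)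
  set a : ℂ := Real.exp (-‖α‖ ^ 2 / 2) * coherentAmplitude (√(1 - ‖η‖ ^ 2) * α) l with ha
  have hcoeff (n : ℕ) : (√((n + l).choose n * (1 - ‖η‖ ^ 2) ^ l) : ℂ) * η ^ n *
      ⟪e (n + l), coherentState e α⟫_ℂ = a * coherentAmplitude (η * α) n := by
    rw [inner_basis_coherentState, mul_left_comm,
      sqrt_add_choose_mul_pow_mul_coherentAmplitude n l ht, mul_assoc]
  simp_rw [hcoeff, mul_smul]
  rw [(summable_coherentAmplitude_smul e (η * α)).tsum_const_smul, coherentState_eq_smul_tsum,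
    smul_smul, attenuatorWeight, ha, mul_right_comm, ← Complex.ofReal_mul, ← Real.exp_add]
  ring_nf

theorem hasSum_norm_sq_attenuatorWeight {η : ℂ} (hη : ‖η‖ ≤ 1) (α : ℂ) :
    HasSum (fun l => ‖attenuatorWeight η α l‖ ^ 2) 1 := by
  have ht : 0 ≤ 1 - ‖η‖ ^ 2 := sub_nonneg.2 (pow_le_one₀ (norm_nonneg η) hη)
  have hsum := (hasSum_norm_sq_coherentAmplitude (√(1 - ‖η‖ ^ 2) * α)).mul_left
    (Real.exp (‖η * α‖ ^ 2 - ‖α‖ ^ 2))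
  have hexp (x : ℝ) : ‖(Real.exp (x / 2) : ℂ)‖ ^ 2 = Real.exp x := by
    rw [Complex.norm_real, Real.norm_of_nonneg (Real.exp_nonneg _), ← Real.exp_nat_mul]
    ring_nf
  have hone :
      Real.exp (‖η * α‖ ^ 2 - ‖α‖ ^ 2) * Real.exp (‖(√(1 - ‖η‖ ^ 2) : ℂ) * α‖ ^ 2) = 1 := by
    rw [← Real.exp_add, norm_mul, norm_mul, Complex.norm_real,
      Real.norm_of_nonneg (Real.sqrt_nonneg _), mul_pow, mul_pow, Real.sq_sqrt ht]
    convert Real.exp_zero using 2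
    ring
  rw [← hone]
  simpa only [attenuatorWeight, norm_mul, mul_pow, hexp] using hsum

end HilbertBasis

/-- For the Kraus operators `K_l(η)` of the attenuator channel and any coherent state `|α⟩`,
`∑_l K_l(η)|α⟩⟨α|K_l(η)* = |ηα⟩⟨ηα|`, i.e. for every `x`,
`∑_l ⟨K_l α, x⟩ K_l α = ⟨ηα, x⟩ |ηα⟩` (sum in the strong topology). -/
theorem attenuator_kraus_coherent {H : Type*} [NormedAddCommGroup H]
    [InnerProductSpace ℂ H] [CompleteSpace H] (e : HilbertBasis ℕ ℂ H)
    (η : ℂ) (hη : ‖η‖ ≤ 1) (K : ℕ → (H →L[ℂ] H))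
    (hK : ∀ (l : ℕ) (ψ : H),
      K l ψ = ∑' n : ℕ,
        (((Real.sqrt ((Nat.choose (n + l) n : ℝ) * (1 - (‖η‖) ^ 2) ^ l) : ℝ) : ℂ)
            * η ^ n * ⟪e (n + l), ψ⟫_ℂ) • e n)
    (α : ℂ) :
    ∀ x : H, HasSum (fun l : ℕ => ⟪K l (coherentState e α), x⟫_ℂ • K l (coherentState e α))
      (⟪coherentState e (η * α), x⟫_ℂ • coherentState e (η * α)) := by
  intro x
  have hKα (l : ℕ) :
      K l (coherentState e α) = attenuatorWeight η α l • coherentState e (η * α) :=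
    (hK l _).trans (tsum_attenuatorKraus_coherentState e hη α l)
  simpa only [hKα, RCLike.ofReal_one, one_smul] using
    hasSum_inner_smul_smul_of_hasSum_norm_sq (hasSum_norm_sq_attenuatorWeight hη α)
      (coherentState e (η * α)) x
end

section
/- For a positive trace class operator ρ with 1 = Tr(ρ) and |η| ≤ 1, the attenuator channel satisfies 1 − ⟨0|Φ_η^att(ρ)|0⟩ = ∑_{l=0}^∞ (1 − (1−|η|²)^l) ⟨l|ρ|l⟩ ≤ |η|² Tr(Nρ). -/
open scoped InnerProductSpace ENNReal

/-!
Only the `n = 0` term of `K_l` reaches `|0⟩`, so `K_l* |0⟩ = √((1 - |η|²)^l) |l⟩` and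
`⟨0|Φ(ρ)|0⟩ = ∑_l (1 - |η|²)^l ⟨l|ρ|l⟩`; subtracting this from `Tr ρ = 1` gives the identity, and
Bernoulli's inequality `1 - (1 - |η|²)^l ≤ l |η|²` gives the bound. The series defining `K_l ψ`
converges because its coefficients have modulus at most one: `C(n+l, n) |η|^{2n} (1 - |η|²)^l` is a
single term of the binomial expansion of `(|η|² + (1 - |η|²))^{n+l} = 1`.
-/

lemma choose_mul_pow_mul_pow_le_add_pow {R : Type*} [CommSemiring R] [PartialOrder R]
    [IsOrderedRing R] {x y : R} (hx : 0 ≤ x) (hy : 0 ≤ y) (n l : ℕ) :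
    ((n + l).choose n : R) * x ^ n * y ^ l ≤ (x + y) ^ (n + l) := by
  rw [add_pow]
  convert Finset.single_le_sum (f := fun k => x ^ k * y ^ (n + l - k) * ((n + l).choose k : R))
    (fun k _ => by positivity) (Finset.mem_range.mpr (Nat.lt_succ_of_le (Nat.le_add_right n l)))
    using 1
  rw [Nat.add_sub_cancel_left]
  ring

lemma ENNReal.ofReal_tsum_le_mul_tsum {ι : Type*} {f g : ι → ℝ} {c : ℝ} (hf₀ : ∀ i, 0 ≤ f i)
    (hf : Summable f) (hc : 0 ≤ c) (hfg : ∀ i, f i ≤ c * g i) :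
    ENNReal.ofReal (∑' i, f i) ≤ ENNReal.ofReal c * ∑' i, ENNReal.ofReal (g i) := by
  rw [ENNReal.ofReal_tsum_of_nonneg hf₀ hf, ← ENNReal.tsum_mul_left]
  refine ENNReal.tsum_le_tsum fun i => ?_
  rw [← ENNReal.ofReal_mul hc]
  exact ENNReal.ofReal_le_ofReal (hfg i)

namespace HilbertBasis

variable {ι H : Type*} [NormedAddCommGroup H] [InnerProductSpace ℂ H] [CompleteSpace H]
  (e : HilbertBasis ι ℂ H) {σ : ι → ι} {a : ι → ℂ} {C : ℝ}

lemma summable_mul_inner_comp_smul (hσ : σ.Injective) (ha : ∀ i, ‖a i‖ ≤ C) (ψ : H) :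
    Summable fun i => (a i * ⟪e (σ i), ψ⟫_ℂ) • e i := by
  refine e.orthonormal.orthogonalFamily.summable_iff_norm_sq_summable
    (fun i => a i * ⟪e (σ i), ψ⟫_ℂ) |>.mpr ?_
  refine .of_nonneg_of_le (fun _ => by positivity) (fun i => ?_)
    ((e.orthonormal.inner_products_summable (x := ψ)).comp_injective hσ |>.mul_left (C ^ 2))
  rw [norm_mul, mul_pow]
  gcongr
  exacts [ha i, le_rfl]

lemma adjoint_apply_eq_smul_of_eq_tsum (hσ : σ.Injective) (ha : ∀ i, ‖a i‖ ≤ C)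
    {K : H →L[ℂ] H} (hK : ∀ ψ, K ψ = ∑' i, (a i * ⟪e (σ i), ψ⟫_ℂ) • e i) (i : ι) :
    ContinuousLinearMap.adjoint K (e i) = starRingEnd ℂ (a i) • e (σ i) := by
  refine ext_inner_right ℂ fun ψ => ?_
  have hsum := (e.summable_mul_inner_comp_smul hσ ha ψ).hasSum.mapL (innerSL ℂ (e i))
  simp only [innerSL_apply_apply, inner_smul_right] at hsum
  rw [ContinuousLinearMap.adjoint_inner_left, inner_smul_left, Complex.conj_conj, hK,
    ← hsum.tsum_eq, tsum_eq_single i fun j hj => ?_]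
  · simp [e.orthonormal.1 i]
  · simp [e.orthonormal.inner_eq_zero (Ne.symm hj)]

end HilbertBasis

noncomputable def attenuatorCoeff (η : ℂ) (l n : ℕ) : ℂ :=
  ((Real.sqrt ((Nat.choose (n + l) n : ℝ) * (1 - ‖η‖ ^ 2) ^ l) : ℝ) : ℂ) * η ^ n

lemma attenuatorCoeff_zero (η : ℂ) (l : ℕ) :
    attenuatorCoeff η l 0 = ((Real.sqrt ((1 - ‖η‖ ^ 2) ^ l) : ℝ) : ℂ) := by
  simp [attenuatorCoeff]

lemma norm_attenuatorCoeff_le_one {η : ℂ} (hη : ‖η‖ ≤ 1) (l n : ℕ) :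
    ‖attenuatorCoeff η l n‖ ≤ 1 := by
  have ht : 0 ≤ 1 - ‖η‖ ^ 2 := by nlinarith [norm_nonneg η]
  have hsq : ‖attenuatorCoeff η l n‖ ^ 2
      = (n + l).choose n * (‖η‖ ^ 2) ^ n * (1 - ‖η‖ ^ 2) ^ l := by
    rw [attenuatorCoeff, norm_mul, mul_pow, Complex.norm_real, Real.norm_eq_abs, sq_abs,
      Real.sq_sqrt (by positivity), norm_pow, ← pow_mul, ← pow_mul']
    ring
  refine (sq_le_one_iff₀ (norm_nonneg _)).mp ?_
  simpa [hsq] using choose_mul_pow_mul_pow_le_add_pow (sq_nonneg ‖η‖) ht n l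

/-- For a positive trace-class `ρ` with `Tr ρ = 1` and `|η| ≤ 1`, the attenuator channel
satisfies `1 − ⟨0|Φ_η(ρ)|0⟩ = ∑_l (1 − (1−|η|²)^l) ⟨l|ρ|l⟩ ≤ |η|² Tr(Nρ)`. -/
theorem attenuator_vacuum_overlap {H : Type*} [NormedAddCommGroup H]
    [InnerProductSpace ℂ H] [CompleteSpace H] (e : HilbertBasis ℕ ℂ H)
    (η : ℂ) (hη : ‖η‖ ≤ 1) (K : ℕ → (H →L[ℂ] H))
    (hK : ∀ (l : ℕ) (ψ : H),
      K l ψ = ∑' n : ℕ,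
        (((Real.sqrt ((Nat.choose (n + l) n : ℝ) * (1 - (‖η‖) ^ 2) ^ l) : ℝ) : ℂ)
            * η ^ n * ⟪e (n + l), ψ⟫_ℂ) • e n)
    (ρ : H →L[ℂ] H) (hρ : ρ.IsPositive)
    (htr : Summable (fun n : ℕ => (⟪e n, ρ (e n)⟫_ℂ).re))
    (htr1 : (∑' n : ℕ, (⟪e n, ρ (e n)⟫_ℂ).re) = 1)
    (Φρ : H →L[ℂ] H)
    (hΦ : ∀ x : H,
      HasSum (fun l : ℕ => K l (ρ ((ContinuousLinearMap.adjoint (K l)) x))) (Φρ x)) :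
    1 - (⟪e 0, Φρ (e 0)⟫_ℂ).re
        = ∑' l : ℕ, (1 - (1 - (‖η‖) ^ 2) ^ l) * (⟪e l, ρ (e l)⟫_ℂ).re ∧
    ENNReal.ofReal (1 - (⟪e 0, Φρ (e 0)⟫_ℂ).re)
        ≤ ENNReal.ofReal ((‖η‖) ^ 2)
            * ∑' n : ℕ, ENNReal.ofReal ((n : ℝ) * (⟪e n, ρ (e n)⟫_ℂ).re) := by
  set t := ‖η‖ ^ 2
  have ht₀ : 0 ≤ t := sq_nonneg _
  have ht₁ : t ≤ 1 := pow_le_one₀ (norm_nonneg η) hη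
  set r : ℕ → ℝ := fun l => (⟪e l, ρ (e l)⟫_ℂ).re
  have hr (l : ℕ) : 0 ≤ r l := (Complex.nonneg_iff.mp (hρ.inner_nonneg_right (e l))).1
  have hadj (l : ℕ) :
      ContinuousLinearMap.adjoint (K l) (e 0) = ((Real.sqrt ((1 - t) ^ l) : ℝ) : ℂ) • e l := by
    simpa [attenuatorCoeff_zero] using
      e.adjoint_apply_eq_smul_of_eq_tsum (add_left_injective l) (norm_attenuatorCoeff_le_one hη l)
        (hK l) 0
  have hterm (l : ℕ) : ⟪e 0, K l (ρ (ContinuousLinearMap.adjoint (K l) (e 0)))⟫_ℂ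
      = ((1 - t) ^ l : ℝ) * ⟪e l, ρ (e l)⟫_ℂ := by
    rw [← ContinuousLinearMap.adjoint_inner_left, hadj, map_smul, inner_smul_left,
      inner_smul_right, Complex.conj_ofReal, ← mul_assoc, ← Complex.ofReal_mul,
      Real.mul_self_sqrt (pow_nonneg (by linarith) l)]
  have hvac : HasSum (fun l => (1 - t) ^ l * r l) (⟪e 0, Φρ (e 0)⟫_ℂ).re := by
    simpa only [ContinuousLinearMap.comp_apply, innerSL_apply_apply, Complex.reCLM_apply, hterm,
      Complex.re_ofReal_mul] using ((hΦ (e 0)).mapL (innerSL ℂ (e 0))).mapL Complex.reCLM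
  have heq : 1 - (⟪e 0, Φρ (e 0)⟫_ℂ).re = ∑' l, (1 - (1 - t) ^ l) * r l := by
    nth_rw 1 [← htr1]
    rw [← hvac.tsum_eq, ← htr.tsum_sub hvac.summable]
    exact tsum_congr fun l => by ring
  refine ⟨heq, heq ▸ ENNReal.ofReal_tsum_le_mul_tsum (fun l => ?_)
    ((htr.sub hvac.summable).congr fun l => by ring) ht₀ (fun l => ?_)⟩
  · exact mul_nonneg (sub_nonneg.mpr (pow_le_one₀ (by linarith) (by linarith))) (hr l)
  · nlinarith [hr l, one_add_mul_sub_le_pow (a := 1 - t) (by linarith) l]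
end

section
/- Let ρ be a positive trace class operator on a Hilbert space H with Tr ρ = 1, Q a self-adjoint projection with Tr(Qρ) ≥ 1 − ε for some ε ∈ [0,1], and Q⊥ = 1 − Q. Then ‖ρ − QρQ − Q⊥ρQ⊥‖₁ ≤ ‖QρQ⊥‖₁ + ‖Q⊥ρQ‖₁ ≤ 2√ε, where the cross-term bound follows from ‖QρQ⊥‖₁ ≤ √(Tr(QρQ)·Tr(Q⊥ρQ⊥)) ≤ √ε. -/
/-!
Write `ρ = S²` with `S = √ρ` self-adjoint and `P = 1 - Q`. The off-diagonal blocks factor as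
`QρP = (SQ)† (SP)` and `PρQ = (SP)† (SQ)`, so by Cauchy–Schwarz each has trace norm at most
`‖SQ‖₂ ‖SP‖₂`. Pythagoras for `Q` splits `1 = Tr ρ = ‖S‖₂² = ‖QS‖₂² + ‖PS‖₂²`, and cyclicity of
the trace gives `‖QS‖₂² = Tr(QS²) = Tr(Qρ) ≥ 1 - ε`; as Hilbert–Schmidt norms are invariant under
adjoints this yields `‖SQ‖₂ ≤ 1` and `‖SP‖₂ ≤ √ε`.
-/

open scoped InnerProductSpace ENNReal

/-- The trace norm of an operator on a separable Hilbert space, as the supremum over pairs of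
Hilbert bases `(f, g)` of `∑_n |⟨f n, T (g n)⟩|` (valued in `[0,∞]`). -/
noncomputable def traceNorm {H : Type*} [NormedAddCommGroup H] [InnerProductSpace ℂ H]
    [CompleteSpace H] (T : H →L[ℂ] H) : ℝ≥0∞ :=
  ⨆ (f : HilbertBasis ℕ ℂ H) (g : HilbertBasis ℕ ℂ H),
    ∑' n : ℕ, (‖⟪f n, T (g n)⟫_ℂ‖₊ : ℝ≥0∞)

theorem ENNReal.inner_le_Lp_mul_Lq_tsum {ι : Type*} {p q : ℝ} (hpq : p.HolderConjugate q)
    (f g : ι → ℝ≥0∞) :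
    ∑' i, f i * g i ≤ (∑' i, f i ^ p) ^ (1 / p) * (∑' i, g i ^ q) ^ (1 / q) := by
  rw [ENNReal.tsum_eq_iSup_sum]
  refine iSup_le fun s => (ENNReal.inner_le_Lp_mul_Lq s f g hpq).trans ?_
  have hp : 0 ≤ 1 / p := one_div_nonneg.2 hpq.nonneg
  have hq : 0 ≤ 1 / q := one_div_nonneg.2 hpq.symm.nonneg
  gcongr <;> exact ENNReal.sum_le_tsum s

section

variable {ι κ 𝕜 E : Type*} [RCLike 𝕜] [NormedAddCommGroup E] [InnerProductSpace 𝕜 E]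

open ContinuousLinearMap

namespace HilbertBasis

theorem hasSum_norm_inner_sq (b : HilbertBasis ι 𝕜 E) (x : E) :
    HasSum (fun i => ‖⟪b i, x⟫_𝕜‖ ^ 2) (‖x‖ ^ 2) := by
  simpa [b.repr_apply_apply] using lp.hasSum_norm (p := 2) (by norm_num) (b.repr x)

theorem tsum_enorm_inner_sq (b : HilbertBasis ι 𝕜 E) (x : E) :
    ∑' i, ‖⟪b i, x⟫_𝕜‖ₑ ^ 2 = ‖x‖ₑ ^ 2 := by
  have h := b.hasSum_norm_inner_sq x
  rw [← ofReal_norm, ← ENNReal.ofReal_pow (norm_nonneg _), ← h.tsum_eq,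
    ENNReal.ofReal_tsum_of_nonneg (fun _ => by positivity) h.summable]
  simp [ENNReal.ofReal_pow, ofReal_norm]

theorem summable_norm_inner_apply_sq {e : HilbertBasis ι 𝕜 E} {T : E →L[𝕜] E}
    (hT : Summable fun i => ‖T (e i)‖ ^ 2) :
    Summable fun p : ι × ι => ‖⟪e p.2, T (e p.1)⟫_𝕜‖ ^ 2 :=
  (summable_prod_of_nonneg fun _ => sq_nonneg _).mpr
    ⟨fun i => (e.hasSum_norm_inner_sq (T (e i))).summable,
      by simpa only [fun i => (e.hasSum_norm_inner_sq (T (e i))).tsum_eq] using hT⟩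

variable [CompleteSpace E]

theorem hasSum_inner_mul_apply_comm {e : HilbertBasis ι 𝕜 E} {A B : E →L[𝕜] E}
    (hA : Summable fun i => ‖A (e i)‖ ^ 2) (hB : Summable fun i => ‖B (e i)‖ ^ 2) :
    HasSum (fun i => ⟪e i, (A * B) (e i)⟫_𝕜) (∑' i, ⟪e i, (B * A) (e i)⟫_𝕜) := by
  set F : ι × ι → 𝕜 := fun p => ⟪e p.1, A (e p.2)⟫_𝕜 * ⟪e p.2, B (e p.1)⟫_𝕜
  have hF : Summable F := by
    refine Summable.of_norm_bounded
      (((e.summable_norm_inner_apply_sq hA).comp_injective Prod.swap_injective).add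
        (e.summable_norm_inner_apply_sq hB)) fun p => ?_
    have h₁ := norm_nonneg ⟪e p.1, A (e p.2)⟫_𝕜
    have h₂ := norm_nonneg ⟪e p.2, B (e p.1)⟫_𝕜
    simp only [F, norm_mul, Function.comp_apply, Prod.fst_swap, Prod.snd_swap]
    nlinarith [sq_nonneg (‖⟪e p.1, A (e p.2)⟫_𝕜‖ - ‖⟪e p.2, B (e p.1)⟫_𝕜‖)]
  have hrows : HasSum (fun i => ⟪e i, (A * B) (e i)⟫_𝕜) (∑' p, F p) := by
    refine hF.hasSum.prod_fiberwise fun i => ?_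
    convert e.hasSum_inner_mul_inner (adjoint A (e i)) (B (e i)) using 1
    · simp only [F, adjoint_inner_left]
    · rw [adjoint_inner_left, mul_apply_eq_comp]
  have hcols : HasSum (fun j => ⟪e j, (B * A) (e j)⟫_𝕜) (∑' p, F p) := by
    refine ((Equiv.prodComm ι ι).hasSum_iff.mpr hF.hasSum).prod_fiberwise fun j => ?_
    convert e.hasSum_inner_mul_inner (adjoint B (e j)) (A (e j)) using 1
    · ext i
      simp only [F, Function.comp_apply, Equiv.prodComm_apply, Prod.fst_swap, Prod.snd_swap,
        adjoint_inner_left, mul_comm]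
    · rw [adjoint_inner_left, mul_apply_eq_comp]
  rwa [hcols.tsum_eq]

end HilbertBasis

noncomputable def hilbertSchmidtSq (T : E →L[𝕜] E) (e : HilbertBasis ι 𝕜 E) : ℝ≥0∞ :=
  ∑' i, ‖T (e i)‖ₑ ^ 2

theorem hilbertSchmidtSq_eq_ofReal {T : E →L[𝕜] E} {e : HilbertBasis ι 𝕜 E} {s : ℝ}
    (h : HasSum (fun i => ‖T (e i)‖ ^ 2) s) : hilbertSchmidtSq T e = ENNReal.ofReal s := by
  rw [← h.tsum_eq, ENNReal.ofReal_tsum_of_nonneg (fun _ => by positivity) h.summable]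
  simp [hilbertSchmidtSq, ENNReal.ofReal_pow, ofReal_norm]

variable [CompleteSpace E]

theorem hilbertSchmidtSq_eq_adjoint (T : E →L[𝕜] E) (f : HilbertBasis ι 𝕜 E)
    (g : HilbertBasis κ 𝕜 E) : hilbertSchmidtSq T f = hilbertSchmidtSq (adjoint T) g :=
  calc ∑' i, ‖T (f i)‖ₑ ^ 2
      = ∑' i, ∑' j, ‖⟪g j, T (f i)⟫_𝕜‖ₑ ^ 2 :=
        tsum_congr fun i => (g.tsum_enorm_inner_sq _).symm
    _ = ∑' j, ∑' i, ‖⟪f i, adjoint T (g j)⟫_𝕜‖ₑ ^ 2 := by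
        rw [ENNReal.tsum_comm]
        refine tsum_congr fun j => tsum_congr fun i => ?_
        rw [← adjoint_inner_left, ← inner_conj_symm, RCLike.enorm_conj]
    _ = ∑' j, ‖adjoint T (g j)‖ₑ ^ 2 := tsum_congr fun j => f.tsum_enorm_inner_sq _

theorem hilbertSchmidtSq_eq_of_basis (T : E →L[𝕜] E) (f : HilbertBasis ι 𝕜 E)
    (g : HilbertBasis κ 𝕜 E) : hilbertSchmidtSq T f = hilbertSchmidtSq T g :=
  (hilbertSchmidtSq_eq_adjoint T f g).trans (hilbertSchmidtSq_eq_adjoint T g g).symm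

namespace IsSelfAdjoint

variable {S T : E →L[𝕜] E}

theorem adjoint_mul (hS : IsSelfAdjoint S) (hT : IsSelfAdjoint T) : adjoint (S * T) = T * S := by
  rw [← star_eq_adjoint, star_mul, hS.star_eq, hT.star_eq]

theorem inner_mul_self_apply (hT : IsSelfAdjoint T) (x : E) :
    ⟪x, (T * T) x⟫_𝕜 = (‖T x‖ ^ 2 : ℝ) := by
  rw [mul_apply_eq_comp, ← adjoint_inner_left, ← star_eq_adjoint, hT.star_eq,
    inner_self_eq_norm_sq_to_K, RCLike.ofReal_pow]

end IsSelfAdjoint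

namespace IsStarProjection

variable {Q S : E →L[𝕜] E}

theorem norm_sq_add_norm_one_sub_sq (hQ : IsStarProjection Q) (x : E) :
    ‖Q x‖ ^ 2 + ‖(1 - Q) x‖ ^ 2 = ‖x‖ ^ 2 := by
  have horth : ⟪Q x, (1 - Q) x⟫_𝕜 = 0 := by
    rw [← adjoint_inner_right, ← star_eq_adjoint, hQ.isSelfAdjoint.star_eq, ← mul_apply_eq_comp,
      hQ.mul_one_sub_self, zero_apply, inner_zero_right]
  have hpyth := norm_add_sq_eq_norm_sq_add_norm_sq_of_inner_eq_zero _ _ horth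
  rw [sub_apply, one_apply_eq_self, add_sub_cancel] at hpyth
  rw [sub_apply, one_apply_eq_self, sq, sq, sq, hpyth]

theorem hasSum_norm_mul_apply_sq {e : HilbertBasis ι 𝕜 E} (hQ : IsStarProjection Q)
    (hS : IsSelfAdjoint S) (hSe : Summable fun i => ‖S (e i)‖ ^ 2) :
    HasSum (fun i => ‖(Q * S) (e i)‖ ^ 2) (∑' i, RCLike.re ⟪e i, (Q * (S * S)) (e i)⟫_𝕜) := by
  have hQSe : Summable fun i => ‖(Q * S) (e i)‖ ^ 2 :=
    hSe.of_nonneg_of_le (fun _ => sq_nonneg _) fun i => by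
      rw [← hQ.norm_sq_add_norm_one_sub_sq (S (e i))]
      exact le_add_of_nonneg_right (sq_nonneg _)
  have hdiag (i : ι) : ⟪e i, (S * (Q * S)) (e i)⟫_𝕜 = (‖(Q * S) (e i)‖ ^ 2 : ℝ) := by
    have h := hQ.isSelfAdjoint.inner_mul_self_apply (S (e i))
    rw [hQ.isIdempotentElem.eq] at h
    rwa [mul_apply_eq_comp, ← adjoint_inner_left, ← star_eq_adjoint, hS.star_eq]
  have hcyc := e.hasSum_inner_mul_apply_comm hQSe hSe
  simp only [hdiag, ← RCLike.ofReal_tsum] at hcyc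
  have hre := RCLike.reCLM.hasSum hcyc
  simp only [RCLike.reCLM_apply, RCLike.ofReal_re] at hre
  rw [← mul_assoc, hre.tsum_eq]
  exact hQSe.hasSum

theorem hilbertSchmidtSq_mul_le {e : HilbertBasis ι 𝕜 E} {ε : ℝ} (hQ : IsStarProjection Q)
    (hS : IsSelfAdjoint S) (hSe : HasSum (fun i => ‖S (e i)‖ ^ 2) 1)
    (hQtr : 1 - ε ≤ ∑' i, RCLike.re ⟪e i, (Q * (S * S)) (e i)⟫_𝕜) :
    hilbertSchmidtSq (S * Q) e ≤ 1 ∧ hilbertSchmidtSq (S * (1 - Q)) e ≤ ENNReal.ofReal ε := by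
  have hQSe := hQ.hasSum_norm_mul_apply_sq hS hSe.summable
  set t := ∑' i, RCLike.re ⟪e i, (Q * (S * S)) (e i)⟫_𝕜
  have hPSe : HasSum (fun i => ‖((1 - Q) * S) (e i)‖ ^ 2) (1 - t) := by
    have hpyth (i : ι) :
        ‖((1 - Q) * S) (e i)‖ ^ 2 = ‖S (e i)‖ ^ 2 - ‖(Q * S) (e i)‖ ^ 2 := by
      rw [← hQ.norm_sq_add_norm_one_sub_sq (S (e i)), mul_apply_eq_comp, mul_apply_eq_comp]
      ring
    simpa only [hpyth] using hSe.sub hQSe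
  constructor
  · rw [hilbertSchmidtSq_eq_adjoint _ e e, hS.adjoint_mul hQ.isSelfAdjoint,
      hilbertSchmidtSq_eq_ofReal hQSe, ← ENNReal.ofReal_one]
    exact ENNReal.ofReal_le_ofReal (sub_nonneg.mp (hPSe.nonneg fun _ => sq_nonneg _))
  · rw [hilbertSchmidtSq_eq_adjoint _ e e, hS.adjoint_mul hQ.one_sub.isSelfAdjoint,
      hilbertSchmidtSq_eq_ofReal hPSe]
    exact ENNReal.ofReal_le_ofReal (by linarith)

end IsStarProjection

variable {H : Type*} [NormedAddCommGroup H] [InnerProductSpace ℂ H] [CompleteSpace H]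

theorem traceNorm_add_le (X Y : H →L[ℂ] H) : traceNorm (X + Y) ≤ traceNorm X + traceNorm Y := by
  refine iSup₂_le fun f g => ?_
  calc ∑' n, (‖⟪f n, (X + Y) (g n)⟫_ℂ‖₊ : ℝ≥0∞)
      ≤ ∑' n, ((‖⟪f n, X (g n)⟫_ℂ‖₊ : ℝ≥0∞) + ‖⟪f n, Y (g n)⟫_ℂ‖₊) := by
        gcongr with n
        rw [add_apply, inner_add_right, ← ENNReal.coe_add, ENNReal.coe_le_coe]
        exact nnnorm_add_le _ _
    _ = ∑' n, (‖⟪f n, X (g n)⟫_ℂ‖₊ : ℝ≥0∞) + ∑' n, (‖⟪f n, Y (g n)⟫_ℂ‖₊ : ℝ≥0∞) :=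
        ENNReal.tsum_add
    _ ≤ traceNorm X + traceNorm Y := by
        gcongr <;> exact le_iSup₂_of_le f g le_rfl

theorem traceNorm_adjoint_mul_le (C D : H →L[ℂ] H) (e : HilbertBasis ι ℂ H) :
    traceNorm (adjoint C * D) ≤
      hilbertSchmidtSq C e ^ (1 / 2 : ℝ) * hilbertSchmidtSq D e ^ (1 / 2 : ℝ) := by
  refine iSup₂_le fun f g => ?_
  calc ∑' n, (‖⟪f n, (adjoint C * D) (g n)⟫_ℂ‖₊ : ℝ≥0∞)
      = ∑' n, ‖⟪C (f n), D (g n)⟫_ℂ‖ₑ := by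
        simp only [mul_apply_eq_comp, adjoint_inner_right, enorm_eq_nnnorm]
    _ ≤ ∑' n, ‖C (f n)‖ₑ * ‖D (g n)‖ₑ := by
        gcongr with n
        simp only [enorm_eq_nnnorm, ← ENNReal.coe_mul, ENNReal.coe_le_coe]
        exact nnnorm_inner_le_nnnorm _ _
    _ ≤ hilbertSchmidtSq C f ^ (1 / 2 : ℝ) * hilbertSchmidtSq D g ^ (1 / 2 : ℝ) := by
        simpa only [hilbertSchmidtSq, ENNReal.rpow_two] using
          ENNReal.inner_le_Lp_mul_Lq_tsum .two_two (fun n => ‖C (f n)‖ₑ) (fun n => ‖D (g n)‖ₑ)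
    _ = hilbertSchmidtSq C e ^ (1 / 2 : ℝ) * hilbertSchmidtSq D e ^ (1 / 2 : ℝ) := by
        rw [hilbertSchmidtSq_eq_of_basis C f e, hilbertSchmidtSq_eq_of_basis D g e]

theorem traceNorm_mul_mul_le {A B S : H →L[ℂ] H} (hA : IsSelfAdjoint A) (hS : IsSelfAdjoint S)
    (e : HilbertBasis ι ℂ H) :
    traceNorm (A * (S * S) * B) ≤
      hilbertSchmidtSq (S * A) e ^ (1 / 2 : ℝ) * hilbertSchmidtSq (S * B) e ^ (1 / 2 : ℝ) := by
  rw [show A * (S * S) * B = adjoint (S * A) * (S * B) by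
    rw [hS.adjoint_mul hA]; noncomm_ring]
  exact traceNorm_adjoint_mul_le _ _ e

end

theorem projection_pinching_bound_general {H : Type*} [NormedAddCommGroup H]
    [InnerProductSpace ℂ H] [CompleteSpace H] (e : HilbertBasis ℕ ℂ H)
    (ρ : H →L[ℂ] H) (hρ : ρ.IsPositive)
    (htr : Summable (fun n : ℕ => (⟪e n, ρ (e n)⟫_ℂ).re))
    (htr1 : (∑' n : ℕ, (⟪e n, ρ (e n)⟫_ℂ).re) = 1)
    (Q : H →L[ℂ] H) (hQsa : IsSelfAdjoint Q) (hQproj : Q * Q = Q)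
    (ε : ℝ) (hε0 : 0 ≤ ε)
    (hQρ : 1 - ε ≤ ∑' n : ℕ, (⟪e n, Q (ρ (e n))⟫_ℂ).re) :
    traceNorm (ρ - Q * ρ * Q - (1 - Q) * ρ * (1 - Q))
        ≤ traceNorm (Q * ρ * (1 - Q)) + traceNorm ((1 - Q) * ρ * Q) ∧
    traceNorm (Q * ρ * (1 - Q)) + traceNorm ((1 - Q) * ρ * Q)
        ≤ ENNReal.ofReal (2 * Real.sqrt ε) := by
  obtain ⟨S, hS, rfl⟩ : ∃ S : H →L[ℂ] H, IsSelfAdjoint S ∧ S * S = ρ :=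
    ⟨CFC.sqrt ρ, .of_nonneg (CFC.sqrt_nonneg ρ),
      CFC.sqrt_mul_sqrt_self ρ ((ContinuousLinearMap.nonneg_iff_isPositive ρ).mpr hρ)⟩
  have hQ : IsStarProjection Q := ⟨hQproj, hQsa⟩
  have hSe : HasSum (fun n => ‖S (e n)‖ ^ 2) 1 := by
    have h := htr.hasSum
    rw [htr1] at h
    simp only [hS.inner_mul_self_apply] at h
    exact h
  obtain ⟨hSQ, hSP⟩ := hQ.hilbertSchmidtSq_mul_le hS hSe hQρ
  have hcross : hilbertSchmidtSq (S * Q) e ^ (1 / 2 : ℝ) *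
      hilbertSchmidtSq (S * (1 - Q)) e ^ (1 / 2 : ℝ) ≤ ENNReal.ofReal (Real.sqrt ε) :=
    calc _ ≤ 1 ^ (1 / 2 : ℝ) * ENNReal.ofReal ε ^ (1 / 2 : ℝ) := by gcongr
      _ = ENNReal.ofReal (Real.sqrt ε) := by
        rw [ENNReal.one_rpow, one_mul, ENNReal.ofReal_rpow_of_nonneg hε0 (by norm_num),
          Real.sqrt_eq_rpow]
  constructor
  · rw [show S * S - Q * (S * S) * Q - (1 - Q) * (S * S) * (1 - Q)
        = Q * (S * S) * (1 - Q) + (1 - Q) * (S * S) * Q by noncomm_ring]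
    exact traceNorm_add_le _ _
  · rw [two_mul, ENNReal.ofReal_add (by positivity) (by positivity)]
    gcongr
    · exact (traceNorm_mul_mul_le hQsa hS e).trans hcross
    · exact (traceNorm_mul_mul_le hQ.one_sub.isSelfAdjoint hS e).trans
        ((mul_comm _ _).trans_le hcross)

/-- Let `ρ ≥ 0` be trace class with `Tr ρ = 1`, `Q` an orthogonal projection with
`Tr(Qρ) ≥ 1 − ε`, `ε ∈ [0,1]`, and `Q⊥ = 1 − Q`. Then
`‖ρ − QρQ − Q⊥ρQ⊥‖₁ ≤ ‖QρQ⊥‖₁ + ‖Q⊥ρQ‖₁ ≤ 2√ε`. -/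
theorem projection_pinching_bound {H : Type*} [NormedAddCommGroup H]
    [InnerProductSpace ℂ H] [CompleteSpace H] (e : HilbertBasis ℕ ℂ H)
    (ρ : H →L[ℂ] H) (hρ : ρ.IsPositive)
    (htr : Summable (fun n : ℕ => (⟪e n, ρ (e n)⟫_ℂ).re))
    (htr1 : (∑' n : ℕ, (⟪e n, ρ (e n)⟫_ℂ).re) = 1)
    (Q : H →L[ℂ] H) (hQsa : IsSelfAdjoint Q) (hQproj : Q * Q = Q)
    (ε : ℝ) (hε0 : 0 ≤ ε) (hε1 : ε ≤ 1)
    (htrQ : Summable (fun n : ℕ => (⟪e n, Q (ρ (e n))⟫_ℂ).re))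
    (hQρ : 1 - ε ≤ ∑' n : ℕ, (⟪e n, Q (ρ (e n))⟫_ℂ).re) :
    traceNorm (ρ - Q * ρ * Q - (1 - Q) * ρ * (1 - Q))
        ≤ traceNorm (Q * ρ * (1 - Q)) + traceNorm ((1 - Q) * ρ * Q) ∧
    traceNorm (Q * ρ * (1 - Q)) + traceNorm ((1 - Q) * ρ * Q)
        ≤ ENNReal.ofReal (2 * Real.sqrt ε) :=
  projection_pinching_bound_general e ρ hρ htr htr1 Q hQsa hQproj ε hε0 hQρ
end

section
/- Let X be a Banach space, M ∈ B(X) a contraction with M^n x → P x for all x (P ∈ B(X)), and L ∈ B(X) with C := sup over the relevant family of norms of L finite. Then for every k ≥ 1 and x ∈ X, (1/n^k) ∑_{i ∈ Δ_disc^k(n)} M^{i_{k+1}} L M^{i_k} L ⋯ M^{i_2} L M^{i_1} x converges to ((PLP)^k / k!) x as n → ∞, where i_{k+1} := n − k − ∑_{l=1}^k i_l. -/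
open Filter

variable {X : Type*} [NormedAddCommGroup X] [NormedSpace ℂ X] [CompleteSpace X]

/-- The ordered product `L·M^{i_k} · L·M^{i_{k-1}} ⋯ L·M^{i_1}` (with `i_l = i (l-1)`). -/
noncomputable def zenoRest (M L : X →L[ℂ] X) : (k : ℕ) → (Fin k → ℕ) → (X →L[ℂ] X)
  | 0, _ => 1
  | (k + 1), i => (L * M ^ (i (Fin.last k))) * zenoRest M L k (fun l => i l.castSucc)

/-!
Write `T_k(n)` for the sum. Splitting off the rightmost factor `L M^{i_1}` gives the recursion
`T_{k+1}(n) = ∑_{j < n-k} T_k(n-1-j) L M^j`. As `‖T_k(m)‖ ≤ ‖L‖^k (m+1)^k` and `L M^j x → L P x`,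
replacing `L M^j x` by its limit changes `T_{k+1}(n) x` by `o(n^{k+1})` (a Cesàro argument). What
remains is essentially `∑_{m < n} T_k(m) (L P x)`; by induction `m^{-k} T_k(m) y → P (LP)^k y / k!`,
and since `∑_{m < n} m^k ~ n^{k+1}/(k+1)` this sum behaves like `n^{k+1}/(k+1)` times that limit.
Finally `P (LP)^k = (PLP)^k` for `k ≥ 1`, because `M^m P = P` forces `P` to be idempotent.
-/

open Finset Topology Asymptotics
open scoped Nat

lemma IsIdempotentElem.mul_mul_pow_succ {R : Type*} [Monoid R] {p : R} (hp : IsIdempotentElem p)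
    (a : R) (n : ℕ) : (p * a * p) ^ (n + 1) = p * (a * p) ^ (n + 1) := by
  have hap : a * p * p = a * p := by rw [mul_assoc, hp.eq]
  rw [pow_succ, mul_assoc p a p, ← mul_assoc _ p, mul_pow_mul, hap, mul_assoc, ← pow_succ]

section StrongLimitOfPowers

variable {R E : Type*} [Semiring R] [TopologicalSpace E] [T2Space E] [AddCommMonoid E] [Module R E]
  {M P : E →L[R] E}

lemma pow_mul_eq_of_tendsto_pow_apply
    (hMP : ∀ x, Tendsto (fun n : ℕ => (M ^ n) x) atTop (𝓝 (P x))) (m : ℕ) : M ^ m * P = P := by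
  ext x
  refine tendsto_nhds_unique (((M ^ m).continuous.tendsto _).comp (hMP x)) ?_
  refine ((hMP x).comp (tendsto_add_atTop_nat m)).congr fun n => ?_
  rw [Function.comp_apply, add_comm, pow_add]
  rfl

lemma isIdempotentElem_of_tendsto_pow_apply
    (hMP : ∀ x, Tendsto (fun n : ℕ => (M ^ n) x) atTop (𝓝 (P x))) : IsIdempotentElem P := by
  ext x
  refine tendsto_nhds_unique (hMP (P x)) (tendsto_const_nhds.congr fun n => ?_)
  rw [← ContinuousLinearMap.comp_apply, ← ContinuousLinearMap.mul_def,
    pow_mul_eq_of_tendsto_pow_apply hMP]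

end StrongLimitOfPowers

lemma sum_range_pow_le_pow_succ_div (k n : ℕ) :
    ∑ i ∈ range n, (i : ℝ) ^ k ≤ (n : ℝ) ^ (k + 1) / (k + 1) := by
  have h := MonotoneOn.sum_le_integral (x₀ := 0) (a := n) (f := fun x : ℝ => x ^ k)
    fun x hx y _ hxy => pow_le_pow_left₀ hx.1 hxy k
  simpa [integral_pow] using h

lemma pow_succ_div_le_sum_range_pow_add (k n : ℕ) :
    (n : ℝ) ^ (k + 1) / (k + 1) ≤ ∑ i ∈ range n, (i : ℝ) ^ k + (n : ℝ) ^ k := by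
  have h := MonotoneOn.integral_le_sum (x₀ := 0) (a := n) (f := fun x : ℝ => x ^ k)
    fun x hx y _ hxy => pow_le_pow_left₀ hx.1 hxy k
  have hshift := sum_range_succ' (fun i : ℕ => (i : ℝ) ^ k) n
  rw [sum_range_succ] at hshift
  simp only [integral_pow, zero_add, ne_eq, add_eq_zero, one_ne_zero, and_false,
    not_false_eq_true, zero_pow, sub_zero] at h
  push_cast at h hshift
  have h0 : (0 : ℝ) ≤ 0 ^ k := by positivity
  linarith

lemma tendsto_sum_range_pow_div_pow_succ (k : ℕ) :
    Tendsto (fun n : ℕ => (∑ i ∈ range n, (i : ℝ) ^ k) / (n : ℝ) ^ (k + 1)) atTop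
      (𝓝 ((k + 1 : ℝ))⁻¹) := by
  have hlower : Tendsto (fun n : ℕ => ((k + 1 : ℝ))⁻¹ - (n : ℝ)⁻¹) atTop (𝓝 ((k + 1 : ℝ))⁻¹) := by
    simpa using tendsto_const_nhds.sub (tendsto_inv_atTop_nhds_zero_nat (𝕜 := ℝ))
  refine tendsto_of_tendsto_of_tendsto_of_le_of_le' hlower tendsto_const_nhds ?_ ?_
  · filter_upwards [eventually_gt_atTop 0] with n hn
    have hn' : (0 : ℝ) < n := by exact_mod_cast hn
    rw [le_div_iff₀ (by positivity)]
    have := pow_succ_div_le_sum_range_pow_add k n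
    calc (((k : ℝ) + 1)⁻¹ - (n : ℝ)⁻¹) * (n : ℝ) ^ (k + 1)
        = (n : ℝ) ^ (k + 1) / (k + 1) - (n : ℝ) ^ k := by field_simp; ring
      _ ≤ _ := by linarith
  · filter_upwards [eventually_gt_atTop 0] with n hn
    rw [div_le_iff₀ (by positivity), inv_mul_eq_div]
    exact sum_range_pow_le_pow_succ_div k n

theorem Filter.Tendsto.cesaro_pow_smul {E : Type*} [NormedAddCommGroup E] [NormedSpace ℝ E]
    {v : ℕ → E} {l : E} {k : ℕ} (h : Tendsto (fun m : ℕ => ((m : ℝ) ^ k)⁻¹ • v m) atTop (𝓝 l)) :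
    Tendsto (fun n : ℕ => ((n : ℝ) ^ (k + 1))⁻¹ • ∑ m ∈ range n, v m) atTop
      (𝓝 ((k + 1 : ℝ)⁻¹ • l)) := by
  set s : ℕ → ℝ := fun n => ∑ m ∈ range n, (m : ℝ) ^ k
  have hs := tendsto_sum_range_pow_div_pow_succ k
  have hs_top : Tendsto s atTop atTop := by
    refine (hs.pos_mul_atTop (by positivity)
      ((tendsto_pow_atTop k.succ_ne_zero).comp tendsto_natCast_atTop_atTop)).congr' ?_
    filter_upwards [eventually_gt_atTop 0] with n hn
    exact div_mul_cancel₀ _ (by positivity)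
  have hs_le : s =O[atTop] fun n : ℕ => (n : ℝ) ^ (k + 1) := by
    refine isBigO_of_le _ fun n => ?_
    rw [Real.norm_of_nonneg (by positivity), Real.norm_of_nonneg (by positivity)]
    exact (sum_range_pow_le_pow_succ_div k n).trans (div_le_self (by positivity) (by linarith))
  have hw : (fun m : ℕ => v m - ((m : ℝ) ^ k) • l) =o[atTop] fun m : ℕ => (m : ℝ) ^ k := by
    have h1 := (isBigO_refl (fun m : ℕ => (m : ℝ) ^ k) atTop).smul_isLittleO
      ((isLittleO_one_iff ℝ).2 (tendsto_sub_nhds_zero_iff.2 h))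
    refine h1.congr' ?_ (by simp)
    filter_upwards [eventually_gt_atTop 0] with m hm
    rw [smul_sub, smul_inv_smul₀ (pow_ne_zero _ (Nat.cast_ne_zero.2 hm.ne'))]
  have hw_sum := ((hw.sum_range (fun m => by positivity) hs_top).trans_isBigO hs_le)
    |>.tendsto_inv_smul_nhds_zero
  have hv := hw_sum.add (hs.smul_const l)
  rw [zero_add] at hv
  refine hv.congr fun n => ?_
  simp only [sum_sub_distrib, ← sum_smul, smul_sub, div_eq_inv_mul, mul_smul]
  abel

section Convolution

variable {𝕜 E F : Type*} [NontriviallyNormedField 𝕜] [NormedAddCommGroup E] [NormedSpace 𝕜 E]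
  [NormedAddCommGroup F] [NormedSpace 𝕜 F] [NormedSpace ℝ F]
  {T : ℕ → E →L[𝕜] F} {k : ℕ} {C : ℝ}

lemma tendsto_inv_pow_smul_sum_range_apply_of_tendsto_zero
    (hT : ∀ m, ‖T m‖ ≤ C * (m + 1) ^ k) {u : ℕ → E} (hu : Tendsto u atTop (𝓝 0)) :
    Tendsto (fun n : ℕ => ((n : ℝ) ^ (k + 1))⁻¹ • ∑ j ∈ range (n - k), T (n - 1 - j) (u j))
      atTop (𝓝 0) := by
  have hC : 0 ≤ C := by simpa using (norm_nonneg _).trans (hT 0)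
  have hces := (hu.norm.cesaro.const_mul C)
  rw [norm_zero, mul_zero] at hces
  refine squeeze_zero_norm' ?_ hces
  filter_upwards [eventually_gt_atTop 0] with n hn
  have hterm : ∀ j ∈ range (n - k), ‖T (n - 1 - j) (u j)‖ ≤ C * n ^ k * ‖u j‖ := by
    intro j hj
    refine (T _).le_of_opNorm_le ((hT _).trans ?_) _
    have : ((n - 1 - j : ℕ) : ℝ) + 1 ≤ n := by
      rw [mem_range] at hj
      exact_mod_cast (show n - 1 - j + 1 ≤ n by omega)
    gcongr
  have hn' : (0 : ℝ) < n := by exact_mod_cast hn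
  rw [norm_smul, norm_inv, norm_pow, Real.norm_natCast]
  calc ((n : ℝ) ^ (k + 1))⁻¹ * ‖∑ j ∈ range (n - k), T (n - 1 - j) (u j)‖
      ≤ ((n : ℝ) ^ (k + 1))⁻¹ * ∑ j ∈ range n, C * n ^ k * ‖u j‖ := by
        gcongr
        refine (norm_sum_le _ _).trans ((sum_le_sum hterm).trans ?_)
        exact sum_le_sum_of_subset_of_nonneg (range_subset_range.2 (Nat.sub_le n k))
          fun j _ _ => by positivity
    _ = C * ((n : ℝ)⁻¹ * ∑ j ∈ range n, ‖u j‖) := by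
        rw [← mul_sum]
        field_simp
        ring

lemma tendsto_inv_pow_smul_sum_range_apply (hT : ∀ m, ‖T m‖ ≤ C * (m + 1) ^ k) {u : ℕ → E}
    {y : E} (hu : Tendsto u atTop (𝓝 y)) {l : F}
    (hl : Tendsto (fun m : ℕ => ((m : ℝ) ^ k)⁻¹ • T m y) atTop (𝓝 l)) :
    Tendsto (fun n : ℕ => ((n : ℝ) ^ (k + 1))⁻¹ • ∑ j ∈ range (n - k), T (n - 1 - j) (u j))
      atTop (𝓝 ((k + 1 : ℝ)⁻¹ • l)) := by
  have hreflect : ∀ n, k ≤ n → ∑ j ∈ range (n - k), T (n - 1 - j) y =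
      ∑ m ∈ range n, T m y - ∑ m ∈ range k, T m y := by
    intro n hkn
    rw [← sum_Ico_eq_sub _ hkn, sum_Ico_eq_sum_range, ← sum_range_reflect]
    refine sum_congr rfl fun j hj => ?_
    rw [mem_range] at hj
    congr 2
    omega
  have hhead : Tendsto (fun n : ℕ => ((n : ℝ) ^ (k + 1))⁻¹ • ∑ m ∈ range k, T m y) atTop (𝓝 0) := by
    simpa using (tendsto_inv_atTop_zero.comp ((tendsto_pow_atTop k.succ_ne_zero).comp
      (tendsto_natCast_atTop_atTop (R := ℝ)))).smul_const (∑ m ∈ range k, T m y)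
  have hlim := (tendsto_inv_pow_smul_sum_range_apply_of_tendsto_zero hT
    (tendsto_sub_nhds_zero_iff.2 hu)).add (hl.cesaro_pow_smul.sub hhead)
  rw [zero_add, sub_zero] at hlim
  refine hlim.congr' ?_
  filter_upwards [eventually_ge_atTop k] with n hkn
  simp only [← smul_sub, ← smul_add, map_sub, sum_sub_distrib, hreflect n hkn]
  abel_nf

end Convolution

def discreteSimplex (k n : ℕ) : Finset (Fin k → ℕ) :=
  Finset.filter (fun i : Fin k → ℕ => ∑ l, i l ≤ n - k)
    (Fintype.piFinset fun _ : Fin k => Finset.range (n + 1))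

lemma mem_discreteSimplex {k n : ℕ} {i : Fin k → ℕ} :
    i ∈ discreteSimplex k n ↔ ∑ l, i l ≤ n - k := by
  simp only [discreteSimplex, mem_filter, Fintype.mem_piFinset, mem_range, and_iff_right_iff_imp]
  intro h l
  have := single_le_sum (fun l _ => Nat.zero_le (i l)) (mem_univ l)
  omega

lemma card_discreteSimplex_le (k n : ℕ) : #(discreteSimplex k n) ≤ (n + 1) ^ k :=
  (card_filter_le _ _).trans (by simp)

lemma sum_discreteSimplex_succ {β : Type*} [AddCommMonoid β] {k n : ℕ} (hkn : k < n)
    (f : (Fin (k + 1) → ℕ) → β) :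
    ∑ i ∈ discreteSimplex (k + 1) n, f i =
      ∑ j ∈ range (n - k), ∑ i ∈ discreteSimplex k (n - 1 - j), f (Fin.cons j i) := by
  rw [sum_sigma']
  refine sum_nbij' (fun i => ⟨i 0, Fin.tail i⟩) (fun p => Fin.cons p.1 p.2) ?_ ?_ ?_ ?_ ?_
  · simp only [mem_discreteSimplex, mem_sigma, mem_range, Fin.sum_univ_succ, Fin.tail]
    intro i hi
    omega
  · simp only [mem_discreteSimplex, mem_sigma, mem_range, Fin.sum_cons]
    intro p hp
    omega
  · simp
  · simp
  · simp

section SimplexSum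

variable {E : Type*} [NormedAddCommGroup E] [NormedSpace ℂ E] (M L : E →L[ℂ] E)

lemma zenoRest_cons {k : ℕ} (j : ℕ) (i : Fin k → ℕ) :
    zenoRest M L (k + 1) (Fin.cons j i) = zenoRest M L k i * (L * M ^ j) := by
  induction k with
  | zero => simp [zenoRest]
  | succ k ih =>
    have hinit : (fun l : Fin (k + 1) => (Fin.cons j i : Fin (k + 2) → ℕ) l.castSucc) =
        Fin.cons j fun l => i l.castSucc := by
      ext l
      cases l using Fin.cases <;> simp
    conv_lhs => rw [zenoRest, hinit, ih]
    conv_rhs => rw [zenoRest]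
    simp only [Fin.cons_last, mul_assoc]

noncomputable def zenoSimplexSum (k n : ℕ) : E →L[ℂ] E :=
  ∑ i ∈ discreteSimplex k n, M ^ (n - k - ∑ l, i l) * zenoRest M L k i

lemma zenoSimplexSum_zero (n : ℕ) : zenoSimplexSum M L 0 n = M ^ n := by
  simp [zenoSimplexSum, discreteSimplex, zenoRest]

lemma zenoSimplexSum_succ {k n : ℕ} (hkn : k < n) :
    zenoSimplexSum M L (k + 1) n =
      ∑ j ∈ range (n - k), zenoSimplexSum M L k (n - 1 - j) * (L * M ^ j) := by
  rw [zenoSimplexSum, sum_discreteSimplex_succ hkn]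
  refine sum_congr rfl fun j _ => ?_
  rw [zenoSimplexSum, sum_mul]
  refine sum_congr rfl fun i _ => ?_
  rw [zenoRest_cons, Fin.sum_cons, ← mul_assoc]
  congr 3
  omega

variable {M}

lemma norm_pow_le_one_of_norm_le_one (hM : ‖M‖ ≤ 1) (a : ℕ) : ‖M ^ a‖ ≤ 1 := by
  cases a with
  | zero => exact ContinuousLinearMap.norm_id_le
  | succ a => exact (norm_pow_le' M a.succ_pos).trans (pow_le_one₀ (norm_nonneg M) hM)

lemma norm_zenoRest_le (hM : ‖M‖ ≤ 1) (k : ℕ) (i : Fin k → ℕ) :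
    ‖zenoRest M L k i‖ ≤ ‖L‖ ^ k := by
  induction k with
  | zero => exact ContinuousLinearMap.norm_id_le
  | succ k ih =>
    rw [zenoRest, pow_succ']
    refine (norm_mul_le _ _).trans (mul_le_mul ?_ (ih _) (norm_nonneg _) (norm_nonneg _))
    simpa using (norm_mul_le L (M ^ _)).trans
      (mul_le_of_le_one_right (norm_nonneg L) (norm_pow_le_one_of_norm_le_one hM _))

lemma norm_zenoSimplexSum_le (hM : ‖M‖ ≤ 1) (k n : ℕ) :
    ‖zenoSimplexSum M L k n‖ ≤ ‖L‖ ^ k * (n + 1) ^ k := by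
  have hterm : ∀ i ∈ discreteSimplex k n,
      ‖M ^ (n - k - ∑ l, i l) * zenoRest M L k i‖ ≤ ‖L‖ ^ k := fun i _ =>
    (norm_mul_le _ _).trans (one_mul (‖L‖ ^ k) ▸ mul_le_mul
      (norm_pow_le_one_of_norm_le_one hM _) (norm_zenoRest_le L hM k i) (norm_nonneg _) zero_le_one)
  calc ‖zenoSimplexSum M L k n‖ ≤ #(discreteSimplex k n) * ‖L‖ ^ k := by
        simpa [zenoSimplexSum] using norm_sum_le_of_le _ hterm
    _ ≤ ‖L‖ ^ k * (n + 1) ^ k := by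
        rw [mul_comm]
        gcongr
        exact_mod_cast card_discreteSimplex_le k n

variable (M) {P : E →L[ℂ] E}

theorem tendsto_zenoSimplexSum (hM : ‖M‖ ≤ 1)
    (hMP : ∀ x, Tendsto (fun n : ℕ => (M ^ n) x) atTop (𝓝 (P x))) (k : ℕ) (x : E) :
    Tendsto (fun n : ℕ => ((n : ℝ) ^ k)⁻¹ • zenoSimplexSum M L k n x) atTop
      (𝓝 ((k ! : ℝ)⁻¹ • (P * (L * P) ^ k) x)) := by
  induction k generalizing x with
  | zero => simpa [zenoSimplexSum_zero] using hMP x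
  | succ k ih =>
    have h := tendsto_inv_pow_smul_sum_range_apply (norm_zenoSimplexSum_le L hM k)
      ((L.continuous.tendsto _).comp (hMP x)) (ih (L (P x)))
    have hlim : ((k + 1)! : ℝ)⁻¹ • (P * (L * P) ^ (k + 1)) x =
        ((k : ℝ) + 1)⁻¹ • (k ! : ℝ)⁻¹ • (P * (L * P) ^ k) (L (P x)) := by
      rw [smul_smul, Nat.factorial_succ, Nat.cast_mul, mul_inv, pow_succ]
      push_cast
      rfl
    rw [hlim]
    refine h.congr' ?_
    filter_upwards [eventually_gt_atTop k] with n hkn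
    rw [zenoSimplexSum_succ M L hkn]
    simp

end SimplexSum

/-- Key lemma behind the strong quantum Zeno limit (constant family case): if `M` is a
contraction with `M^n x → P x` for all `x`, and `L` is bounded, then for every `k ≥ 1` and
every `x`, `(1/n^k) ∑_{i ∈ Δ_disc^k(n)} M^{i_{k+1}} L M^{i_k} ⋯ L M^{i_1} x → ((PLP)^k/k!) x`
as `n → ∞`, where `i_{k+1} = n − k − ∑_{l=1}^k i_l`. -/
theorem zeno_simplex_sum_tendsto (M P L : X →L[ℂ] X) (hM : ‖M‖ ≤ 1)
    (hconv : ∀ x : X, Tendsto (fun n : ℕ => (M ^ n) x) atTop (nhds (P x)))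
    (k : ℕ) (hk : 1 ≤ k) (x : X) :
    Tendsto (fun n : ℕ =>
        (((n : ℂ)) ^ k)⁻¹ •
          ∑ i ∈ Finset.filter (fun i : Fin k → ℕ => ∑ l, i l ≤ n - k)
              (Fintype.piFinset fun _ : Fin k => Finset.range (n + 1)),
            (M ^ (n - k - ∑ l, i l) * zenoRest M L k i) x)
      atTop (nhds (((Nat.factorial k : ℂ))⁻¹ • ((P * L * P) ^ k) x)) := by
  obtain ⟨k, rfl⟩ := Nat.exists_eq_add_of_le' hk
  rw [(isIdempotentElem_of_tendsto_pow_apply hconv).mul_mul_pow_succ]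
  convert tendsto_zenoSimplexSum M L hM hconv (k + 1) x using 2 with n
  · rw [← Complex.coe_smul, zenoSimplexSum, _root_.sum_apply]
    push_cast
    rfl
  · rw [← Complex.coe_smul]
    push_cast
    rfl
end
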